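/- arXiv:0708.1357 — 5 statements merged into one kernel-verified Lean document; each statement's English description precedes it below -/
import Mathlib

section
/- Let χ₁, χ₂, χ₃ be signed permutation matrices, at least two of which are symmetric. Then for every choice of signs ε₁, ε₂, ε₃ ∈ {+1,−1}, the patterns diag(ε₁χ₁, ε₂χ₂, ε₃χ₃) and diag(χ₁,χ₂,χ₃) are I-Wilf equivalent: for every n ≥ 1, the number of signed involutions in SI_n avoiding diag(ε₁χ₁,ε₂χ₂,ε₃χ₃) equals the number avoiding diag(χ₁,χ₂,χ₃). -/
open Matrix

/-- A signed permutation matrix: entries in {0,1,-1}, with exactly one nonzero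
entry in each row and each column. -/
def IsSignedPermMatrix {n : ℕ} (M : Matrix (Fin n) (Fin n) ℤ) : Prop :=
  (∀ i j, M i j = 0 ∨ M i j = 1 ∨ M i j = -1) ∧
  (∀ i, ∃! j, M i j ≠ 0) ∧
  (∀ j, ∃! i, M i j ≠ 0)

/-- `M` contains the pattern `τ`: some `k×k` submatrix of `M`, taken with rows
and columns in increasing order, equals `τ`. -/
def ContainsPattern {n k : ℕ} (M : Matrix (Fin n) (Fin n) ℤ)
    (τ : Matrix (Fin k) (Fin k) ℤ) : Prop :=
  ∃ r c : Fin k → Fin n, StrictMono r ∧ StrictMono c ∧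
    ∀ a b, M (r a) (c b) = τ a b

/-- Block diagonal matrix [[A,0],[0,B]]. -/
def blockDiag2 {a b : ℕ} (A : Matrix (Fin a) (Fin a) ℤ) (B : Matrix (Fin b) (Fin b) ℤ) :
    Matrix (Fin (a + b)) (Fin (a + b)) ℤ :=
  Matrix.reindex finSumFinEquiv finSumFinEquiv
    (Matrix.fromBlocks A (0 : Matrix (Fin a) (Fin b) ℤ) (0 : Matrix (Fin b) (Fin a) ℤ) B)

/-- Block diagonal matrix with three blocks. -/
def blockDiag3 {a b c : ℕ} (A : Matrix (Fin a) (Fin a) ℤ) (B : Matrix (Fin b) (Fin b) ℤ)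
    (C : Matrix (Fin c) (Fin c) ℤ) : Matrix (Fin (a + b + c)) (Fin (a + b + c)) ℤ :=
  blockDiag2 (blockDiag2 A B) C

/-- Block antidiagonal matrix [[0,A],[B,0]]. -/
def antiBlock2 {a b : ℕ} (A : Matrix (Fin a) (Fin a) ℤ) (B : Matrix (Fin b) (Fin b) ℤ) :
    Matrix (Fin (a + b)) (Fin (a + b)) ℤ :=
  Matrix.reindex finSumFinEquiv (finSumFinEquiv.trans (finCongr (Nat.add_comm b a)))
    (Matrix.fromBlocks (0 : Matrix (Fin a) (Fin b) ℤ) A B (0 : Matrix (Fin b) (Fin a) ℤ))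

/-- For a signed permutation matrix σ, the involution σ' = [[0,σ],[σᵗ,0]]. -/
def primePat {k : ℕ} (σ : Matrix (Fin k) (Fin k) ℤ) :
    Matrix (Fin (k + k)) (Fin (k + k)) ℤ :=
  Matrix.reindex finSumFinEquiv finSumFinEquiv
    (Matrix.fromBlocks (0 : Matrix (Fin k) (Fin k) ℤ) σ σ.transpose
      (0 : Matrix (Fin k) (Fin k) ℤ))

/-- For a signed permutation matrix σ, the involution σ'' = [[0,0,σ],[0,1,0],[σᵗ,0,0]]. -/
def doublePrimePat {k : ℕ} (σ : Matrix (Fin k) (Fin k) ℤ) :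
    Matrix (Fin (k + (1 + k))) (Fin (k + (1 + k))) ℤ :=
  Matrix.reindex ((Equiv.sumCongr (Equiv.refl (Fin k)) finSumFinEquiv).trans finSumFinEquiv)
    ((Equiv.sumCongr (Equiv.refl (Fin k)) finSumFinEquiv).trans finSumFinEquiv)
    (Matrix.fromBlocks
      (0 : Matrix (Fin k) (Fin k) ℤ)
      (Matrix.of fun (i : Fin k) (j : Fin 1 ⊕ Fin k) =>
        Sum.elim (fun _ => (0 : ℤ)) (fun j' => σ i j') j)
      (Matrix.of fun (i : Fin 1 ⊕ Fin k) (j : Fin k) =>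
        Sum.elim (fun _ => (0 : ℤ)) (fun i' => σ.transpose i' j) i)
      (Matrix.fromBlocks (1 : Matrix (Fin 1) (Fin 1) ℤ) 0 0 (0 : Matrix (Fin k) (Fin k) ℤ)))

/-- β_k, the antidiagonal k×k permutation matrix (pattern k(k-1)…1). -/
def betaMat (k : ℕ) : Matrix (Fin k) (Fin k) ℤ :=
  Matrix.of fun i j => if (i : ℕ) + (j : ℕ) + 1 = k then 1 else 0

/-- |SI_n(τ)|: the number of τ-avoiding signed involutions of size n. -/
noncomputable def SIAvoidCount (n : ℕ) {k : ℕ} (τ : Matrix (Fin k) (Fin k) ℤ) : ℕ :=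
  {M : Matrix (Fin n) (Fin n) ℤ |
    IsSignedPermMatrix M ∧ M.IsSymm ∧ ¬ ContainsPattern M τ}.ncard

/-- |B_n(τ)|: the number of τ-avoiding signed permutations of size n. -/
noncomputable def BAvoidCount (n : ℕ) {k : ℕ} (τ : Matrix (Fin k) (Fin k) ℤ) : ℕ :=
  {M : Matrix (Fin n) (Fin n) ℤ | IsSignedPermMatrix M ∧ ¬ ContainsPattern M τ}.ncard

/-! ### Auxiliary machinery for stmt12 -/

section Aux

open Matrix

variable {n p q : ℕ}

/-- An occurrence matching only the nonzero cells of the pattern. -/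
def NZOcc {n k : ℕ} (M : Matrix (Fin n) (Fin n) ℤ) (X : Matrix (Fin k) (Fin k) ℤ)
    (r c : Fin k → Fin n) : Prop :=
  StrictMono r ∧ StrictMono c ∧ ∀ a b, X a b ≠ 0 → M (r a) (c b) = X a b

def HasNZOcc {n k : ℕ} (M : Matrix (Fin n) (Fin n) ℤ) (X : Matrix (Fin k) (Fin k) ℤ) : Prop :=
  ∃ r c, NZOcc M X r c

/-- An occurrence all of whose row and column indices are `< i` resp. `< j`. -/
def OccBelow {n k : ℕ} (M : Matrix (Fin n) (Fin n) ℤ) (X : Matrix (Fin k) (Fin k) ℤ)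
    (i j : ℕ) : Prop :=
  ∃ r c, NZOcc M X r c ∧ (∀ a, (r a : ℕ) < i) ∧ (∀ a, (c a : ℕ) < j)

/-- The region of cells having an occurrence of `A` or `Aᵀ` strictly to the north-west. -/
def Rset {n p : ℕ} (A : Matrix (Fin p) (Fin p) ℤ) (M : Matrix (Fin n) (Fin n) ℤ)
    (i j : ℕ) : Prop :=
  OccBelow M A i j ∨ OccBelow M Aᵀ i j

open Classical in
/-- The sign-toggling involution: negate entries inside the region `Rset`. -/
noncomputable def Psi {n p : ℕ} (A : Matrix (Fin p) (Fin p) ℤ)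
    (M : Matrix (Fin n) (Fin n) ℤ) : Matrix (Fin n) (Fin n) ℤ :=
  Matrix.of fun i j => if Rset A M (i : ℕ) (j : ℕ) then -M i j else M i j

open Classical in
lemma psi_apply (A : Matrix (Fin p) (Fin p) ℤ) (M : Matrix (Fin n) (Fin n) ℤ) (i j : Fin n) :
    Psi A M i j = if Rset A M (i : ℕ) (j : ℕ) then -M i j else M i j := rfl

lemma psi_apply_of {A : Matrix (Fin p) (Fin p) ℤ} {M : Matrix (Fin n) (Fin n) ℤ} {i j : Fin n}
    (h : Rset A M (i : ℕ) (j : ℕ)) : Psi A M i j = -M i j := by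
  rw [psi_apply, if_pos h]

lemma psi_apply_of_not {A : Matrix (Fin p) (Fin p) ℤ} {M : Matrix (Fin n) (Fin n) ℤ} {i j : Fin n}
    (h : ¬ Rset A M (i : ℕ) (j : ℕ)) : Psi A M i j = M i j := by
  rw [psi_apply, if_neg h]

lemma occBelow_mono {M : Matrix (Fin n) (Fin n) ℤ} {X : Matrix (Fin p) (Fin p) ℤ}
    {i j i' j' : ℕ} (h : OccBelow M X i j) (hi : i ≤ i') (hj : j ≤ j') : OccBelow M X i' j' := by
  obtain ⟨r, c, hocc, hr, hc⟩ := h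
  exact ⟨r, c, hocc, fun a => lt_of_lt_of_le (hr a) hi, fun a => lt_of_lt_of_le (hc a) hj⟩

lemma rset_mono {A : Matrix (Fin p) (Fin p) ℤ} {M : Matrix (Fin n) (Fin n) ℤ}
    {i j i' j' : ℕ} (h : Rset A M i j) (hi : i ≤ i') (hj : j ≤ j') : Rset A M i' j' :=
  h.imp (fun h' => occBelow_mono h' hi hj) (fun h' => occBelow_mono h' hi hj)

lemma rset_of {A X : Matrix (Fin p) (Fin p) ℤ} {M : Matrix (Fin n) (Fin n) ℤ} {i j : ℕ}
    (hX : X = A ∨ X = Aᵀ) (h : OccBelow M X i j) : Rset A M i j := by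
  rcases hX with rfl | rfl
  · exact Or.inl h
  · exact Or.inr h

lemma rset_iff {A : Matrix (Fin p) (Fin p) ℤ} {M : Matrix (Fin n) (Fin n) ℤ} {i j : ℕ} :
    Rset A M i j ↔ ∃ X, (X = A ∨ X = Aᵀ) ∧ OccBelow M X i j := by
  constructor
  · rintro (h | h)
    · exact ⟨A, Or.inl rfl, h⟩
    · exact ⟨Aᵀ, Or.inr rfl, h⟩
  · rintro ⟨X, hX, h⟩; exact rset_of hX h

/-- L5: a clean occurrence (all of whose cells are outside `Rset`) can be found
north-west of any point of `Rset`. -/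
lemma rset_clean {A : Matrix (Fin p) (Fin p) ℤ} {M : Matrix (Fin n) (Fin n) ℤ} {i j : ℕ}
    (h : Rset A M i j) :
    ∃ X r c, (X = A ∨ X = Aᵀ) ∧ NZOcc M X r c ∧ (∀ a, (r a : ℕ) < i) ∧ (∀ a, (c a : ℕ) < j) ∧
      ∀ a b, X a b ≠ 0 → ¬ Rset A M (r a : ℕ) (c b : ℕ) := by
  have key : ∀ N i j, i + j = N → Rset A M i j →
      ∃ X r c, (X = A ∨ X = Aᵀ) ∧ NZOcc M X r c ∧ (∀ a, (r a : ℕ) < i) ∧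
        (∀ a, (c a : ℕ) < j) ∧ ∀ a b, X a b ≠ 0 → ¬ Rset A M (r a : ℕ) (c b : ℕ) := by
    intro N
    induction N using Nat.strong_induction_on with
    | _ N ih =>
      intro i j hN h
      obtain ⟨X, hX, r, c, hocc, hri, hcj⟩ : ∃ X, (X = A ∨ X = Aᵀ) ∧ ∃ r c, NZOcc M X r c ∧
          (∀ a, (r a : ℕ) < i) ∧ (∀ a, (c a : ℕ) < j) := by
        obtain ⟨X, hX, r, c, hocc, hri, hcj⟩ := rset_iff.mp h
        exact ⟨X, hX, r, c, hocc, hri, hcj⟩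
      by_cases hbad : ∃ a b, X a b ≠ 0 ∧ Rset A M (r a : ℕ) (c b : ℕ)
      · obtain ⟨a, b, hab, hR⟩ := hbad
        have hlt : (r a : ℕ) + (c b : ℕ) < N := by
          have h1 := hri a; have h2 := hcj b; omega
        obtain ⟨X', r', c', hX', hocc', hri', hcj', hclean⟩ :=
          ih _ hlt (r a : ℕ) (c b : ℕ) rfl hR
        refine ⟨X', r', c', hX', hocc', fun a' => (hri' a').trans (hri a),
          fun a' => (hcj' a').trans (hcj b), hclean⟩
      · push_neg at hbad
        exact ⟨X, r, c, hX, hocc, hri, hcj, hbad⟩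
  exact key (i + j) i j rfl h

/-- L6: `Rset` is invariant under `Psi`. -/
lemma rset_psi (A : Matrix (Fin p) (Fin p) ℤ) (M : Matrix (Fin n) (Fin n) ℤ) (i j : ℕ) :
    Rset A (Psi A M) i j ↔ Rset A M i j := by
  have key : ∀ N i j, i + j = N → (Rset A (Psi A M) i j ↔ Rset A M i j) := by
    intro N
    induction N using Nat.strong_induction_on with
    | _ N ih =>
      intro i j hN
      constructor
      · intro h
        obtain ⟨X, r, c, hX, hocc, hri, hcj, hclean⟩ := rset_clean h
        refine rset_of hX ⟨r, c, ⟨hocc.1, hocc.2.1, fun a b hab => ?_⟩, hri, hcj⟩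
        have hsum : (r a : ℕ) + (c b : ℕ) < N := by
          have h1 := hri a; have h2 := hcj b; omega
        have hnot : ¬ Rset A M (r a : ℕ) (c b : ℕ) := by
          intro hco
          exact hclean a b hab ((ih _ hsum _ _ rfl).mpr hco)
        rw [← psi_apply_of_not hnot]
        exact hocc.2.2 a b hab
      · intro h
        obtain ⟨X, r, c, hX, hocc, hri, hcj, hclean⟩ := rset_clean h
        refine rset_of hX ⟨r, c, ⟨hocc.1, hocc.2.1, fun a b hab => ?_⟩, hri, hcj⟩
        rw [psi_apply_of_not (hclean a b hab)]
        exact hocc.2.2 a b hab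
  exact key (i + j) i j rfl

/-- L7: `Psi` is an involution. -/
lemma psi_psi (A : Matrix (Fin p) (Fin p) ℤ) (M : Matrix (Fin n) (Fin n) ℤ) :
    Psi A (Psi A M) = M := by
  funext i j
  by_cases h : Rset A M (i : ℕ) (j : ℕ)
  · rw [show Psi A (Psi A M) i j = _ from psi_apply_of ((rset_psi A M _ _).mpr h),
      psi_apply_of h, neg_neg]
  · rw [show Psi A (Psi A M) i j = _ from
      psi_apply_of_not (fun hc => h ((rset_psi A M _ _).mp hc)), psi_apply_of_not h]

lemma psi_ne_zero_iff {A : Matrix (Fin p) (Fin p) ℤ} {M : Matrix (Fin n) (Fin n) ℤ}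
    {i j : Fin n} : Psi A M i j ≠ 0 ↔ M i j ≠ 0 := by
  by_cases h : Rset A M (i : ℕ) (j : ℕ)
  · rw [psi_apply_of h]; simp
  · rw [psi_apply_of_not h]

/-- `Psi` preserves signed permutation matrices. -/
lemma psi_spm {A : Matrix (Fin p) (Fin p) ℤ} {M : Matrix (Fin n) (Fin n) ℤ}
    (hM : IsSignedPermMatrix M) : IsSignedPermMatrix (Psi A M) := by
  obtain ⟨h1, h2, h3⟩ := hM
  refine ⟨fun i j => ?_, fun i => ?_, fun j => ?_⟩
  · by_cases h : Rset A M (i : ℕ) (j : ℕ)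
    · rw [psi_apply_of h]
      rcases h1 i j with h' | h' | h' <;> rw [h'] <;> simp
    · rw [psi_apply_of_not h]; exact h1 i j
  · obtain ⟨j₀, hj₀, hu⟩ := h2 i
    exact ⟨j₀, psi_ne_zero_iff.mpr hj₀, fun y hy => hu y (psi_ne_zero_iff.mp hy)⟩
  · obtain ⟨i₀, hi₀, hu⟩ := h3 j
    exact ⟨i₀, psi_ne_zero_iff.mpr hi₀, fun y hy => hu y (psi_ne_zero_iff.mp hy)⟩

lemma rset_swap {A : Matrix (Fin p) (Fin p) ℤ} {M : Matrix (Fin n) (Fin n) ℤ}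
    (hM : M.IsSymm) {i j : ℕ} (h : Rset A M i j) : Rset A M j i := by
  obtain ⟨X, hX, r, c, hocc, hri, hcj⟩ := rset_iff.mp h
  refine rset_of (X := Xᵀ) ?_ ⟨c, r, ⟨hocc.2.1, hocc.1, fun a b hab => ?_⟩, hcj, hri⟩
  · rcases hX with rfl | rfl
    · exact Or.inr rfl
    · exact Or.inl (Matrix.transpose_transpose A)
  · have hM' : M (c a) (r b) = M (r b) (c a) :=
      (congrFun (congrFun hM (c a)) (r b)).symm
    rw [hM']
    exact hocc.2.2 b a hab

/-- `Psi` preserves symmetry. -/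
lemma psi_symm {A : Matrix (Fin p) (Fin p) ℤ} {M : Matrix (Fin n) (Fin n) ℤ}
    (hM : M.IsSymm) : (Psi A M).IsSymm := by
  refine Matrix.IsSymm.ext fun i j => ?_
  have hMij : M j i = M i j := congrFun (congrFun hM i) j
  by_cases h : Rset A M (i : ℕ) (j : ℕ)
  · rw [psi_apply_of h, psi_apply_of (rset_swap hM h), hMij]
  · rw [psi_apply_of_not h, psi_apply_of_not (fun hc => h (rset_swap hM hc)), hMij]

end Aux
section Aux2

open Matrix

variable {n p q : ℕ}

lemma fin_add_cases (x : Fin (p + q)) :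
    (∃ a : Fin p, x = Fin.castAdd q a) ∨ (∃ b : Fin q, x = Fin.natAdd p b) := by
  by_cases h : (x : ℕ) < p
  · exact Or.inl ⟨⟨x, h⟩, by ext; simp⟩
  · refine Or.inr ⟨⟨(x : ℕ) - p, by have := x.isLt; omega⟩, by ext; simp; omega⟩

lemma bd2_ll (A : Matrix (Fin p) (Fin p) ℤ) (C : Matrix (Fin q) (Fin q) ℤ) (a b : Fin p) :
    blockDiag2 A C (Fin.castAdd q a) (Fin.castAdd q b) = A a b := by
  simp [blockDiag2]

lemma bd2_rr (A : Matrix (Fin p) (Fin p) ℤ) (C : Matrix (Fin q) (Fin q) ℤ) (a b : Fin q) :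
    blockDiag2 A C (Fin.natAdd p a) (Fin.natAdd p b) = C a b := by
  simp [blockDiag2]

lemma bd2_lr (A : Matrix (Fin p) (Fin p) ℤ) (C : Matrix (Fin q) (Fin q) ℤ) (a : Fin p)
    (b : Fin q) : blockDiag2 A C (Fin.castAdd q a) (Fin.natAdd p b) = 0 := by
  simp [blockDiag2]

lemma bd2_rl (A : Matrix (Fin p) (Fin p) ℤ) (C : Matrix (Fin q) (Fin q) ℤ) (a : Fin q)
    (b : Fin p) : blockDiag2 A C (Fin.natAdd p a) (Fin.castAdd q b) = 0 := by
  simp [blockDiag2]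

lemma castAdd_lt_natAdd (a : Fin p) (b : Fin q) : Fin.castAdd q a < Fin.natAdd p b := by
  rw [Fin.lt_def]; simp; omega

/-- Values of `Fin.addCases`-concatenation. -/
lemma addCases_cases (r : Fin p → Fin n) (u : Fin q → Fin n) (x : Fin (p + q)) :
    (∃ a, x = Fin.castAdd q a ∧
      Fin.addCases (motive := fun _ => Fin n) r u x = r a) ∨
    (∃ b, x = Fin.natAdd p b ∧
      Fin.addCases (motive := fun _ => Fin n) r u x = u b) := by
  rcases fin_add_cases x with ⟨a, rfl⟩ | ⟨b, rfl⟩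
  · exact Or.inl ⟨a, rfl, by simp⟩
  · exact Or.inr ⟨b, rfl, by simp⟩

lemma strictMono_addCases {r : Fin p → Fin n} {u : Fin q → Fin n}
    (hr : StrictMono r) (hu : StrictMono u) (h : ∀ a b, r a < u b) :
    StrictMono (fun x => Fin.addCases (motive := fun _ => Fin n) r u x) := by
  intro x y hxy
  rcases addCases_cases r u x with ⟨a, rfl, hx⟩ | ⟨a, rfl, hx⟩ <;>
    rcases addCases_cases r u y with ⟨b, rfl, hy⟩ | ⟨b, rfl, hy⟩ <;>
    simp only [Fin.addCases_left, Fin.addCases_right]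
  · refine hr ?_
    rw [Fin.lt_def] at hxy ⊢; simpa using hxy
  · exact h a b
  · exfalso; rw [Fin.lt_def] at hxy; simp at hxy
    have := b.isLt; have := a.isLt; omega
  · refine hu ?_
    rw [Fin.lt_def] at hxy ⊢
    simp at hxy ⊢; omega

/-- Splitting an occurrence of `blockDiag2 A C`: the left part. -/
lemma nzocc_bd2_left {M : Matrix (Fin n) (Fin n) ℤ} {A : Matrix (Fin p) (Fin p) ℤ}
    {C : Matrix (Fin q) (Fin q) ℤ} {r c : Fin (p + q) → Fin n}
    (h : NZOcc M (blockDiag2 A C) r c) :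
    NZOcc M A (r ∘ Fin.castAdd q) (c ∘ Fin.castAdd q) := by
  refine ⟨h.1.comp (fun x y hxy => ?_), h.2.1.comp (fun x y hxy => ?_), fun a b hab => ?_⟩
  · rw [Fin.lt_def] at hxy ⊢; simpa using hxy
  · rw [Fin.lt_def] at hxy ⊢; simpa using hxy
  · have := h.2.2 (Fin.castAdd q a) (Fin.castAdd q b) (by rw [bd2_ll]; exact hab)
    rwa [bd2_ll] at this

/-- Splitting an occurrence of `blockDiag2 A C`: the right part. -/
lemma nzocc_bd2_right {M : Matrix (Fin n) (Fin n) ℤ} {A : Matrix (Fin p) (Fin p) ℤ}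
    {C : Matrix (Fin q) (Fin q) ℤ} {r c : Fin (p + q) → Fin n}
    (h : NZOcc M (blockDiag2 A C) r c) :
    NZOcc M C (r ∘ Fin.natAdd p) (c ∘ Fin.natAdd p) := by
  refine ⟨h.1.comp (fun x y hxy => ?_), h.2.1.comp (fun x y hxy => ?_), fun a b hab => ?_⟩
  · rw [Fin.lt_def] at hxy ⊢; simp at hxy ⊢; omega
  · rw [Fin.lt_def] at hxy ⊢; simp at hxy ⊢; omega
  · have := h.2.2 (Fin.natAdd p a) (Fin.natAdd p b) (by rw [bd2_rr]; exact hab)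
    rwa [bd2_rr] at this

/-- Combining occurrences of `A` and `C` into one of `blockDiag2 A C`. -/
lemma nzocc_bd2_combine {M : Matrix (Fin n) (Fin n) ℤ} {A : Matrix (Fin p) (Fin p) ℤ}
    {C : Matrix (Fin q) (Fin q) ℤ} {r c : Fin p → Fin n} {u v : Fin q → Fin n}
    (h1 : NZOcc M A r c) (h2 : NZOcc M C u v)
    (hru : ∀ a b, r a < u b) (hcv : ∀ a b, c a < v b) :
    NZOcc M (blockDiag2 A C)
      (fun x => Fin.addCases (motive := fun _ => Fin n) r u x)
      (fun x => Fin.addCases (motive := fun _ => Fin n) c v x) := by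
  refine ⟨strictMono_addCases h1.1 h2.1 hru, strictMono_addCases h1.2.1 h2.2.1 hcv,
    fun x y hxy => ?_⟩
  rcases addCases_cases r u x with ⟨a, rfl, hx⟩ | ⟨a, rfl, hx⟩ <;>
    rcases addCases_cases c v y with ⟨b, rfl, hy⟩ | ⟨b, rfl, hy⟩ <;>
    simp only [Fin.addCases_left, Fin.addCases_right]
  · rw [bd2_ll] at hxy ⊢; exact h1.2.2 a b hxy
  · rw [bd2_lr] at hxy; exact absurd rfl hxy
  · rw [bd2_rl] at hxy; exact absurd rfl hxy
  · rw [bd2_rr] at hxy ⊢; exact h2.2.2 a b hxy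

end Aux2
section Aux3

open Matrix

variable {n p q : ℕ}

lemma spm_rowful {k : ℕ} {X : Matrix (Fin k) (Fin k) ℤ} (hX : IsSignedPermMatrix X)
    (a : Fin k) : ∃ b, X a b ≠ 0 := by
  obtain ⟨b, hb, -⟩ := hX.2.1 a
  exact ⟨b, hb⟩

lemma spm_neg {k : ℕ} {X : Matrix (Fin k) (Fin k) ℤ} (hX : IsSignedPermMatrix X) :
    IsSignedPermMatrix (-X) := by
  obtain ⟨h1, h2, h3⟩ := hX
  refine ⟨fun i j => ?_, fun i => ?_, fun j => ?_⟩
  · rcases h1 i j with h | h | h <;> simp [h]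
  · obtain ⟨j₀, hj₀, hu⟩ := h2 i
    exact ⟨j₀, by simpa using hj₀, fun y hy => hu y (by simpa using hy)⟩
  · obtain ⟨i₀, hi₀, hu⟩ := h3 j
    exact ⟨i₀, by simpa using hi₀, fun y hy => hu y (by simpa using hy)⟩

lemma spm_transpose {k : ℕ} {X : Matrix (Fin k) (Fin k) ℤ} (hX : IsSignedPermMatrix X) :
    IsSignedPermMatrix Xᵀ :=
  ⟨fun i j => hX.1 j i, hX.2.2, hX.2.1⟩

lemma spm_bd2 {A : Matrix (Fin p) (Fin p) ℤ} {C : Matrix (Fin q) (Fin q) ℤ}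
    (hA : IsSignedPermMatrix A) (hC : IsSignedPermMatrix C) :
    IsSignedPermMatrix (blockDiag2 A C) := by
  obtain ⟨hA1, hA2, hA3⟩ := hA
  obtain ⟨hC1, hC2, hC3⟩ := hC
  refine ⟨fun i j => ?_, fun i => ?_, fun j => ?_⟩
  · rcases fin_add_cases i with ⟨a, rfl⟩ | ⟨a, rfl⟩ <;>
      rcases fin_add_cases j with ⟨b, rfl⟩ | ⟨b, rfl⟩
    · rw [bd2_ll]; exact hA1 a b
    · rw [bd2_lr]; exact Or.inl rfl
    · rw [bd2_rl]; exact Or.inl rfl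
    · rw [bd2_rr]; exact hC1 a b
  · rcases fin_add_cases i with ⟨a, rfl⟩ | ⟨a, rfl⟩
    · obtain ⟨b₀, hb₀, hu⟩ := hA2 a
      refine ⟨Fin.castAdd q b₀, by simpa only [bd2_ll] using hb₀, fun y hy => ?_⟩
      rcases fin_add_cases y with ⟨b, rfl⟩ | ⟨b, rfl⟩
      · rw [bd2_ll] at hy; exact congrArg _ (hu b hy)
      · rw [bd2_lr] at hy; exact absurd rfl hy
    · obtain ⟨b₀, hb₀, hu⟩ := hC2 a
      refine ⟨Fin.natAdd p b₀, by simpa only [bd2_rr] using hb₀, fun y hy => ?_⟩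
      rcases fin_add_cases y with ⟨b, rfl⟩ | ⟨b, rfl⟩
      · rw [bd2_rl] at hy; exact absurd rfl hy
      · rw [bd2_rr] at hy; exact congrArg _ (hu b hy)
  · rcases fin_add_cases j with ⟨b, rfl⟩ | ⟨b, rfl⟩
    · obtain ⟨a₀, ha₀, hu⟩ := hA3 b
      refine ⟨Fin.castAdd q a₀, by simpa only [bd2_ll] using ha₀, fun y hy => ?_⟩
      rcases fin_add_cases y with ⟨a, rfl⟩ | ⟨a, rfl⟩
      · rw [bd2_ll] at hy; exact congrArg _ (hu a hy)
      · rw [bd2_rl] at hy; exact absurd rfl hy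
    · obtain ⟨a₀, ha₀, hu⟩ := hC3 b
      refine ⟨Fin.natAdd p a₀, by simpa only [bd2_rr] using ha₀, fun y hy => ?_⟩
      rcases fin_add_cases y with ⟨a, rfl⟩ | ⟨a, rfl⟩
      · rw [bd2_lr] at hy; exact absurd rfl hy
      · rw [bd2_rr] at hy; exact congrArg _ (hu a hy)

lemma bd2_transpose (A : Matrix (Fin p) (Fin p) ℤ) (C : Matrix (Fin q) (Fin q) ℤ) :
    (blockDiag2 A C)ᵀ = blockDiag2 Aᵀ Cᵀ := by
  funext i j
  rw [Matrix.transpose_apply]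
  rcases fin_add_cases i with ⟨a, rfl⟩ | ⟨a, rfl⟩ <;>
    rcases fin_add_cases j with ⟨b, rfl⟩ | ⟨b, rfl⟩ <;>
    simp only [bd2_ll, bd2_lr, bd2_rl, bd2_rr, Matrix.transpose_apply]

lemma bd2_neg (A : Matrix (Fin p) (Fin p) ℤ) (C : Matrix (Fin q) (Fin q) ℤ) :
    blockDiag2 (-A) (-C) = -(blockDiag2 A C) := by
  funext i j
  rw [Matrix.neg_apply]
  rcases fin_add_cases i with ⟨a, rfl⟩ | ⟨a, rfl⟩ <;>
    rcases fin_add_cases j with ⟨b, rfl⟩ | ⟨b, rfl⟩ <;>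
    simp only [bd2_ll, bd2_lr, bd2_rl, bd2_rr, Matrix.neg_apply, neg_zero]

lemma isSymm_bd2 {A : Matrix (Fin p) (Fin p) ℤ} {C : Matrix (Fin q) (Fin q) ℤ}
    (hA : A.IsSymm) (hC : C.IsSymm) : (blockDiag2 A C).IsSymm := by
  unfold Matrix.IsSymm
  rw [bd2_transpose, hA.eq, hC.eq]

lemma isSymm_neg {k : ℕ} {X : Matrix (Fin k) (Fin k) ℤ} (hX : X.IsSymm) : (-X).IsSymm := by
  unfold Matrix.IsSymm
  rw [Matrix.transpose_neg, hX.eq]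

/-- L1: for signed permutation matrices, pattern containment can be checked on
the nonzero cells only. -/
lemma contains_iff_hasNZOcc {k : ℕ} {M : Matrix (Fin n) (Fin n) ℤ}
    {τ : Matrix (Fin k) (Fin k) ℤ} (hM : IsSignedPermMatrix M)
    (hrow : ∀ a, ∃ b, τ a b ≠ 0) :
    ContainsPattern M τ ↔ HasNZOcc M τ := by
  constructor
  · rintro ⟨r, c, hr, hc, h⟩
    exact ⟨r, c, hr, hc, fun a b _ => h a b⟩
  · rintro ⟨r, c, hr, hc, h⟩
    refine ⟨r, c, hr, hc, fun a b => ?_⟩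
    by_cases hab : τ a b = 0
    · rw [hab]
      obtain ⟨b₀, hb₀⟩ := hrow a
      have hM0 : M (r a) (c b₀) ≠ 0 := by rw [h a b₀ hb₀]; exact hb₀
      obtain ⟨y, _, hu⟩ := hM.2.1 (r a)
      by_contra hne
      have h1 : c b = y := hu _ hne
      have h2 : c b₀ = y := hu _ hM0
      have : b = b₀ := hc.injective (h1.trans h2.symm)
      rw [this] at hab
      exact hb₀ hab
    · exact h a b hab

/-- For symmetric matrices, containment of `τ` and `τᵀ` agree. -/
lemma contains_transpose_of {k : ℕ} {M : Matrix (Fin n) (Fin n) ℤ}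
    {τ : Matrix (Fin k) (Fin k) ℤ} (hM : M.IsSymm) (h : ContainsPattern M τ) :
    ContainsPattern M τᵀ := by
  obtain ⟨r, c, hr, hc, hv⟩ := h
  refine ⟨c, r, hc, hr, fun a b => ?_⟩
  have hs : M (c a) (r b) = M (r b) (c a) := (congrFun (congrFun hM (c a)) (r b)).symm
  rw [hs, hv b a, Matrix.transpose_apply]

/-- negation of the matrix is a bijection on signed symmetric matrices
compatible with pattern avoidance. -/
lemma contains_neg_iff {k : ℕ} {M : Matrix (Fin n) (Fin n) ℤ}
    {τ : Matrix (Fin k) (Fin k) ℤ} : ContainsPattern (-M) (-τ) ↔ ContainsPattern M τ := by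
  constructor
  · rintro ⟨r, c, hr, hc, h⟩
    refine ⟨r, c, hr, hc, fun a b => ?_⟩
    have := h a b
    rw [Matrix.neg_apply, Matrix.neg_apply] at this
    omega
  · rintro ⟨r, c, hr, hc, h⟩
    refine ⟨r, c, hr, hc, fun a b => ?_⟩
    rw [Matrix.neg_apply, Matrix.neg_apply, h a b]

lemma siavoid_neg {k : ℕ} (τ : Matrix (Fin k) (Fin k) ℤ) :
    SIAvoidCount n τ = SIAvoidCount n (-τ) := by
  unfold SIAvoidCount
  have himg : (fun M : Matrix (Fin n) (Fin n) ℤ => -M) ''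
      {M | IsSignedPermMatrix M ∧ M.IsSymm ∧ ¬ ContainsPattern M τ} =
      {M | IsSignedPermMatrix M ∧ M.IsSymm ∧ ¬ ContainsPattern M (-τ)} := by
    ext N
    simp only [Set.mem_image, Set.mem_setOf_eq]
    constructor
    · rintro ⟨M, ⟨hspm, hsym, havoid⟩, rfl⟩
      exact ⟨spm_neg hspm, isSymm_neg hsym, fun hc => havoid (contains_neg_iff.mp hc)⟩
    · rintro ⟨hspm, hsym, havoid⟩
      refine ⟨-N, ⟨spm_neg hspm, isSymm_neg hsym, fun hc => havoid ?_⟩, neg_neg N⟩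
      have hc' : ContainsPattern (-N) (- -τ) := by rwa [neg_neg]
      exact contains_neg_iff.mp hc'
  rw [← himg, Set.ncard_image_of_injOn (fun x _ y _ h => neg_injective h)]

end Aux3
section Aux4

open Matrix

variable {n p q : ℕ}

lemma one_step {A X : Matrix (Fin p) (Fin p) ℤ} {C : Matrix (Fin q) (Fin q) ℤ}
    (hq : 0 < q) {M : Matrix (Fin n) (Fin n) ℤ}
    (hX : X = A ∨ X = Aᵀ) (h : HasNZOcc M (blockDiag2 X C)) :
    ∃ X', (X' = A ∨ X' = Aᵀ) ∧ HasNZOcc (Psi A M) (blockDiag2 X' (-C)) := by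
  obtain ⟨rh, ch, hocc⟩ := h
  have hoccA : NZOcc M X (rh ∘ Fin.castAdd q) (ch ∘ Fin.castAdd q) := nzocc_bd2_left hocc
  have hoccC : NZOcc M C (rh ∘ Fin.natAdd p) (ch ∘ Fin.natAdd p) := nzocc_bd2_right hocc
  set u : Fin q → Fin n := rh ∘ Fin.natAdd p with hu
  set v : Fin q → Fin n := ch ∘ Fin.natAdd p with hv
  set z : Fin q := ⟨0, hq⟩ with hz
  have hzle : ∀ a : Fin q, z ≤ a := fun a => by rw [Fin.le_def]; simp [hz]
  have hR : Rset A M (u z : ℕ) (v z : ℕ) := by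
    refine rset_of hX ⟨_, _, hoccA, fun a => ?_, fun a => ?_⟩
    · exact Fin.lt_def.mp (hocc.1 (castAdd_lt_natAdd a z))
    · exact Fin.lt_def.mp (hocc.2.1 (castAdd_lt_natAdd a z))
  obtain ⟨X', r', c', hX', hocc', hb1, hb2, hclean⟩ := rset_clean hR
  refine ⟨X', hX', ?_⟩
  have hoccA' : NZOcc (Psi A M) X' r' c' :=
    ⟨hocc'.1, hocc'.2.1, fun a b hab => by
      rw [psi_apply_of_not (hclean a b hab)]; exact hocc'.2.2 a b hab⟩
  have hoccC' : NZOcc (Psi A M) (-C) u v := by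
    refine ⟨hoccC.1, hoccC.2.1, fun a b hab => ?_⟩
    have hCab : C a b ≠ 0 := by simpa using hab
    have hRcell : Rset A M (u a : ℕ) (v b : ℕ) := by
      refine rset_mono hR ?_ ?_
      · exact Fin.le_def.mp (hoccC.1.monotone (hzle a))
      · exact Fin.le_def.mp (hoccC.2.1.monotone (hzle b))
    rw [psi_apply_of hRcell, hoccC.2.2 a b hCab, Matrix.neg_apply]
  refine ⟨_, _, nzocc_bd2_combine hoccA' hoccC' (fun a b => ?_) (fun a b => ?_)⟩
  · rw [Fin.lt_def]
    have h1 := hb1 a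
    have h2 : (u z : ℕ) ≤ (u b : ℕ) := Fin.le_def.mp (hoccC.1.monotone (hzle b))
    omega
  · rw [Fin.lt_def]
    have h1 := hb2 a
    have h2 : (v z : ℕ) ≤ (v b : ℕ) := Fin.le_def.mp (hoccC.2.1.monotone (hzle b))
    omega

lemma one (hq : 0 < q) (A : Matrix (Fin p) (Fin p) ℤ) (C : Matrix (Fin q) (Fin q) ℤ)
    (M : Matrix (Fin n) (Fin n) ℤ)
    (h : HasNZOcc M (blockDiag2 A C) ∨ HasNZOcc M (blockDiag2 Aᵀ C)) :
    HasNZOcc (Psi A M) (blockDiag2 A (-C)) ∨ HasNZOcc (Psi A M) (blockDiag2 Aᵀ (-C)) := by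
  rcases h with h | h
  · obtain ⟨X', hX', h2⟩ := one_step hq (Or.inl rfl) h
    rcases hX' with rfl | rfl
    · exact Or.inl h2
    · exact Or.inr h2
  · obtain ⟨X', hX', h2⟩ := one_step hq (Or.inr rfl) h
    rcases hX' with rfl | rfl
    · exact Or.inl h2
    · exact Or.inr h2

lemma collapse {A : Matrix (Fin p) (Fin p) ℤ} {C : Matrix (Fin q) (Fin q) ℤ}
    {M : Matrix (Fin n) (Fin n) ℤ} (hM : IsSignedPermMatrix M) (hMs : M.IsSymm)
    (hA : IsSignedPermMatrix A) (hC : IsSignedPermMatrix C) (hs : A.IsSymm ∨ C.IsSymm) :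
    ContainsPattern M (blockDiag2 A C) ↔
      (HasNZOcc M (blockDiag2 A C) ∨ HasNZOcc M (blockDiag2 Aᵀ C)) := by
  constructor
  · intro h
    exact Or.inl ((contains_iff_hasNZOcc hM (spm_rowful (spm_bd2 hA hC))).mp h)
  · rintro (h | h)
    · exact (contains_iff_hasNZOcc hM (spm_rowful (spm_bd2 hA hC))).mpr h
    · have h' : ContainsPattern M (blockDiag2 Aᵀ C) :=
        (contains_iff_hasNZOcc hM (spm_rowful (spm_bd2 (spm_transpose hA) hC))).mpr h
      rcases hs with hsA | hsC
      · rwa [hsA.eq] at h'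
      · have h'' := contains_transpose_of hMs h'
        rwa [bd2_transpose, Matrix.transpose_transpose, hsC.eq] at h''

/-- CORE: for symmetric signed involutions, the sign of the last block of a
block-diagonal pattern can be flipped, provided one of the two blocks is symmetric. -/
lemma core {p q n : ℕ} (A : Matrix (Fin p) (Fin p) ℤ) (C : Matrix (Fin q) (Fin q) ℤ)
    (hA : IsSignedPermMatrix A) (hC : IsSignedPermMatrix C) (hs : A.IsSymm ∨ C.IsSymm) :
    SIAvoidCount n (blockDiag2 A C) = SIAvoidCount n (blockDiag2 A (-C)) := by
  rcases Nat.eq_zero_or_pos q with hq | hq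
  · subst hq
    have hCC : -C = C := by
      funext i j
      exact i.elim0
    rw [hCC]
  · have hsets : ∀ (C' : Matrix (Fin q) (Fin q) ℤ), IsSignedPermMatrix C' →
        (A.IsSymm ∨ C'.IsSymm) →
        {M : Matrix (Fin n) (Fin n) ℤ | IsSignedPermMatrix M ∧ M.IsSymm ∧
          ¬ ContainsPattern M (blockDiag2 A C')} =
        {M | IsSignedPermMatrix M ∧ M.IsSymm ∧
          ¬ (HasNZOcc M (blockDiag2 A C') ∨ HasNZOcc M (blockDiag2 Aᵀ C'))} := by
      intro C' hC' hs'
      ext M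
      simp only [Set.mem_setOf_eq]
      exact ⟨fun ⟨h1, h2, h3⟩ => ⟨h1, h2, fun hc => h3 ((collapse h1 h2 hA hC' hs').mpr hc)⟩,
        fun ⟨h1, h2, h3⟩ => ⟨h1, h2, fun hc => h3 ((collapse h1 h2 hA hC' hs').mp hc)⟩⟩
    have hsC' : A.IsSymm ∨ (-C).IsSymm := hs.imp id isSymm_neg
    unfold SIAvoidCount
    rw [hsets C hC hs, hsets (-C) (spm_neg hC) hsC']
    have hinj : Function.Injective (Psi A (n := n)) := fun M N h => by
      rw [← psi_psi A M, h, psi_psi]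
    have himg : Psi A '' {M : Matrix (Fin n) (Fin n) ℤ | IsSignedPermMatrix M ∧ M.IsSymm ∧
          ¬ (HasNZOcc M (blockDiag2 A C) ∨ HasNZOcc M (blockDiag2 Aᵀ C))} =
        {M | IsSignedPermMatrix M ∧ M.IsSymm ∧
          ¬ (HasNZOcc M (blockDiag2 A (-C)) ∨ HasNZOcc M (blockDiag2 Aᵀ (-C)))} := by
      ext N
      simp only [Set.mem_image, Set.mem_setOf_eq]
      constructor
      · rintro ⟨M, ⟨h1, h2, h3⟩, rfl⟩
        refine ⟨psi_spm h1, psi_symm h2, fun hc => h3 ?_⟩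
        have h4 := one hq A (-C) (Psi A M) hc
        rwa [psi_psi, neg_neg] at h4
      · rintro ⟨h1, h2, h3⟩
        refine ⟨Psi A N, ⟨psi_spm h1, psi_symm h2, fun hc => h3 ?_⟩, psi_psi A N⟩
        have h4 := one hq A C (Psi A N) hc
        rwa [psi_psi] at h4
    rw [← himg, Set.ncard_image_of_injOn (Function.Injective.injOn hinj)]

end Aux4
section Aux5

open Matrix

variable {n : ℕ}

lemma hasNZOcc_assoc {a b c : ℕ} {M : Matrix (Fin n) (Fin n) ℤ}
    {X : Matrix (Fin a) (Fin a) ℤ} {Y : Matrix (Fin b) (Fin b) ℤ}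
    {Z : Matrix (Fin c) (Fin c) ℤ} :
    HasNZOcc M (blockDiag3 X Y Z) ↔ HasNZOcc M (blockDiag2 X (blockDiag2 Y Z)) := by
  constructor
  · rintro ⟨rh, ch, hocc⟩
    have hXY : NZOcc M (blockDiag2 X Y) (rh ∘ Fin.castAdd c) (ch ∘ Fin.castAdd c) :=
      nzocc_bd2_left hocc
    have hZ : NZOcc M Z (rh ∘ Fin.natAdd (a + b)) (ch ∘ Fin.natAdd (a + b)) :=
      nzocc_bd2_right hocc
    have hXo : NZOcc M X ((rh ∘ Fin.castAdd c) ∘ Fin.castAdd b)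
        ((ch ∘ Fin.castAdd c) ∘ Fin.castAdd b) := nzocc_bd2_left hXY
    have hYo : NZOcc M Y ((rh ∘ Fin.castAdd c) ∘ Fin.natAdd a)
        ((ch ∘ Fin.castAdd c) ∘ Fin.natAdd a) := nzocc_bd2_right hXY
    have hYZ := nzocc_bd2_combine hYo hZ
      (fun i j => hocc.1 (by rw [Fin.lt_def]; simp; omega))
      (fun i j => hocc.2.1 (by rw [Fin.lt_def]; simp; omega))
    refine ⟨_, _, nzocc_bd2_combine hXo hYZ (fun i x => ?_) (fun i x => ?_)⟩
    · rcases fin_add_cases x with ⟨j, rfl⟩ | ⟨j, rfl⟩ <;>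
        simp only [Fin.addCases_left, Fin.addCases_right] <;>
        exact hocc.1 (by rw [Fin.lt_def]; simp; omega)
    · rcases fin_add_cases x with ⟨j, rfl⟩ | ⟨j, rfl⟩ <;>
        simp only [Fin.addCases_left, Fin.addCases_right] <;>
        exact hocc.2.1 (by rw [Fin.lt_def]; simp; omega)
  · rintro ⟨rh, ch, hocc⟩
    have hXo : NZOcc M X (rh ∘ Fin.castAdd (b + c)) (ch ∘ Fin.castAdd (b + c)) :=
      nzocc_bd2_left hocc
    have hYZ : NZOcc M (blockDiag2 Y Z) (rh ∘ Fin.natAdd a) (ch ∘ Fin.natAdd a) :=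
      nzocc_bd2_right hocc
    have hYo : NZOcc M Y ((rh ∘ Fin.natAdd a) ∘ Fin.castAdd c)
        ((ch ∘ Fin.natAdd a) ∘ Fin.castAdd c) := nzocc_bd2_left hYZ
    have hZo : NZOcc M Z ((rh ∘ Fin.natAdd a) ∘ Fin.natAdd b)
        ((ch ∘ Fin.natAdd a) ∘ Fin.natAdd b) := nzocc_bd2_right hYZ
    have hXY := nzocc_bd2_combine hXo hYo
      (fun i j => hocc.1 (by rw [Fin.lt_def]; simp; omega))
      (fun i j => hocc.2.1 (by rw [Fin.lt_def]; simp; omega))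
    refine ⟨_, _, nzocc_bd2_combine hXY hZo (fun x j => ?_) (fun x j => ?_)⟩
    · rcases fin_add_cases x with ⟨i, rfl⟩ | ⟨i, rfl⟩ <;>
        simp only [Fin.addCases_left, Fin.addCases_right] <;>
        exact hocc.1 (by rw [Fin.lt_def]; simp; omega)
    · rcases fin_add_cases x with ⟨i, rfl⟩ | ⟨i, rfl⟩ <;>
        simp only [Fin.addCases_left, Fin.addCases_right] <;>
        exact hocc.2.1 (by rw [Fin.lt_def]; simp; omega)

lemma siavoid_assoc {a b c : ℕ} (X : Matrix (Fin a) (Fin a) ℤ) (Y : Matrix (Fin b) (Fin b) ℤ)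
    (Z : Matrix (Fin c) (Fin c) ℤ) (hX : IsSignedPermMatrix X) (hY : IsSignedPermMatrix Y)
    (hZ : IsSignedPermMatrix Z) :
    SIAvoidCount n (blockDiag3 X Y Z) = SIAvoidCount n (blockDiag2 X (blockDiag2 Y Z)) := by
  have hspm3 : IsSignedPermMatrix (blockDiag3 X Y Z) := spm_bd2 (spm_bd2 hX hY) hZ
  have hspm2 : IsSignedPermMatrix (blockDiag2 X (blockDiag2 Y Z)) :=
    spm_bd2 hX (spm_bd2 hY hZ)
  unfold SIAvoidCount
  congr 1
  ext M
  simp only [Set.mem_setOf_eq]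
  constructor
  · rintro ⟨h1, h2, h3⟩
    refine ⟨h1, h2, fun hcon => h3 ?_⟩
    exact (contains_iff_hasNZOcc h1 (spm_rowful hspm3)).mpr
      (hasNZOcc_assoc.mpr ((contains_iff_hasNZOcc h1 (spm_rowful hspm2)).mp hcon))
  · rintro ⟨h1, h2, h3⟩
    refine ⟨h1, h2, fun hcon => h3 ?_⟩
    exact (contains_iff_hasNZOcc h1 (spm_rowful hspm2)).mpr
      (hasNZOcc_assoc.mp ((contains_iff_hasNZOcc h1 (spm_rowful hspm3)).mp hcon))

lemma bd3_neg {a b c : ℕ} (X : Matrix (Fin a) (Fin a) ℤ) (Y : Matrix (Fin b) (Fin b) ℤ)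
    (Z : Matrix (Fin c) (Fin c) ℤ) :
    blockDiag3 (-X) (-Y) (-Z) = -(blockDiag3 X Y Z) := by
  show blockDiag2 (blockDiag2 (-X) (-Y)) (-Z) = -(blockDiag2 (blockDiag2 X Y) Z)
  rw [bd2_neg X Y, bd2_neg]

section Flips

variable {a b c : ℕ} (X : Matrix (Fin a) (Fin a) ℤ) (Y : Matrix (Fin b) (Fin b) ℤ)
  (Z : Matrix (Fin c) (Fin c) ℤ)

lemma flip3 (hX : IsSignedPermMatrix X) (hY : IsSignedPermMatrix Y) (hZ : IsSignedPermMatrix Z)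
    (hs : (X.IsSymm ∧ Y.IsSymm) ∨ (X.IsSymm ∧ Z.IsSymm) ∨ (Y.IsSymm ∧ Z.IsSymm)) :
    SIAvoidCount n (blockDiag3 X Y (-Z)) = SIAvoidCount n (blockDiag3 X Y Z) := by
  have hcond : (blockDiag2 X Y).IsSymm ∨ Z.IsSymm := by
    rcases hs with ⟨hx, hy⟩ | ⟨_, hz⟩ | ⟨_, hz⟩
    · exact Or.inl (isSymm_bd2 hx hy)
    · exact Or.inr hz
    · exact Or.inr hz
  exact (core (blockDiag2 X Y) Z (spm_bd2 hX hY) hZ hcond).symm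

lemma flip1 (hX : IsSignedPermMatrix X) (hY : IsSignedPermMatrix Y) (hZ : IsSignedPermMatrix Z)
    (hs : (X.IsSymm ∧ Y.IsSymm) ∨ (X.IsSymm ∧ Z.IsSymm) ∨ (Y.IsSymm ∧ Z.IsSymm)) :
    SIAvoidCount n (blockDiag3 (-X) Y Z) = SIAvoidCount n (blockDiag3 X Y Z) := by
  rw [siavoid_assoc (-X) Y Z (spm_neg hX) hY hZ, siavoid_assoc X Y Z hX hY hZ]
  have hSspm : IsSignedPermMatrix (blockDiag2 Y Z) := spm_bd2 hY hZ
  have hcond : X.IsSymm ∨ (-(blockDiag2 Y Z)).IsSymm := by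
    rcases hs with ⟨hx, _⟩ | ⟨hx, _⟩ | ⟨hy, hz⟩
    · exact Or.inl hx
    · exact Or.inl hx
    · exact Or.inr (isSymm_neg (isSymm_bd2 hy hz))
  calc SIAvoidCount n (blockDiag2 (-X) (blockDiag2 Y Z))
      = SIAvoidCount n (-(blockDiag2 (-X) (blockDiag2 Y Z))) := siavoid_neg _
    _ = SIAvoidCount n (blockDiag2 X (-(blockDiag2 Y Z))) := by rw [← bd2_neg, neg_neg]
    _ = SIAvoidCount n (blockDiag2 X (-(-(blockDiag2 Y Z)))) :=
        core X (-(blockDiag2 Y Z)) hX (spm_neg hSspm) hcond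
    _ = SIAvoidCount n (blockDiag2 X (blockDiag2 Y Z)) := by rw [neg_neg]

lemma flip2 (hX : IsSignedPermMatrix X) (hY : IsSignedPermMatrix Y) (hZ : IsSignedPermMatrix Z)
    (hs : (X.IsSymm ∧ Y.IsSymm) ∨ (X.IsSymm ∧ Z.IsSymm) ∨ (Y.IsSymm ∧ Z.IsSymm)) :
    SIAvoidCount n (blockDiag3 X (-Y) Z) = SIAvoidCount n (blockDiag3 X Y Z) := by
  have hs' : (X.IsSymm ∧ Y.IsSymm) ∨ (X.IsSymm ∧ (-Z).IsSymm) ∨ (Y.IsSymm ∧ (-Z).IsSymm) := by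
    rcases hs with ⟨hx, hy⟩ | ⟨hx, hz⟩ | ⟨hy, hz⟩
    · exact Or.inl ⟨hx, hy⟩
    · exact Or.inr (Or.inl ⟨hx, isSymm_neg hz⟩)
    · exact Or.inr (Or.inr ⟨hy, isSymm_neg hz⟩)
  calc SIAvoidCount n (blockDiag3 X (-Y) Z)
      = SIAvoidCount n (-(blockDiag3 X (-Y) Z)) := siavoid_neg _
    _ = SIAvoidCount n (blockDiag3 (-X) Y (-Z)) := by rw [← bd3_neg, neg_neg]
    _ = SIAvoidCount n (blockDiag3 X Y (-Z)) := flip1 X Y (-Z) hX hY (spm_neg hZ) hs'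
    _ = SIAvoidCount n (blockDiag3 X Y Z) := flip3 X Y Z hX hY hZ hs

end Flips

end Aux5

/-- if at least two of χ₁, χ₂, χ₃ are symmetric, then for any signs
ε₁, ε₂, ε₃ ∈ {+1,−1}, diag(ε₁χ₁,ε₂χ₂,ε₃χ₃) and diag(χ₁,χ₂,χ₃) are I-Wilf equivalent. -/
theorem stmt12 {a b c : ℕ} (χ₁ : Matrix (Fin a) (Fin a) ℤ) (χ₂ : Matrix (Fin b) (Fin b) ℤ)
    (χ₃ : Matrix (Fin c) (Fin c) ℤ)
    (h1 : IsSignedPermMatrix χ₁) (h2 : IsSignedPermMatrix χ₂) (h3 : IsSignedPermMatrix χ₃)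
    (hsym : (χ₁.IsSymm ∧ χ₂.IsSymm) ∨ (χ₁.IsSymm ∧ χ₃.IsSymm) ∨ (χ₂.IsSymm ∧ χ₃.IsSymm))
    (ε₁ ε₂ ε₃ : ℤ) (hε₁ : ε₁ = 1 ∨ ε₁ = -1) (hε₂ : ε₂ = 1 ∨ ε₂ = -1)
    (hε₃ : ε₃ = 1 ∨ ε₃ = -1) :
    ∀ n : ℕ, 1 ≤ n →
      SIAvoidCount n (blockDiag3 (ε₁ • χ₁) (ε₂ • χ₂) (ε₃ • χ₃)) =
      SIAvoidCount n (blockDiag3 χ₁ χ₂ χ₃) := by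
  intro n _
  have hsN1 : ((-χ₁).IsSymm ∧ χ₂.IsSymm) ∨ ((-χ₁).IsSymm ∧ χ₃.IsSymm) ∨
      (χ₂.IsSymm ∧ χ₃.IsSymm) := by
    rcases hsym with ⟨h, h'⟩ | ⟨h, h'⟩ | ⟨h, h'⟩
    · exact Or.inl ⟨isSymm_neg h, h'⟩
    · exact Or.inr (Or.inl ⟨isSymm_neg h, h'⟩)
    · exact Or.inr (Or.inr ⟨h, h'⟩)
  have hsN2 : (χ₁.IsSymm ∧ (-χ₂).IsSymm) ∨ (χ₁.IsSymm ∧ χ₃.IsSymm) ∨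
      ((-χ₂).IsSymm ∧ χ₃.IsSymm) := by
    rcases hsym with ⟨h, h'⟩ | ⟨h, h'⟩ | ⟨h, h'⟩
    · exact Or.inl ⟨h, isSymm_neg h'⟩
    · exact Or.inr (Or.inl ⟨h, h'⟩)
    · exact Or.inr (Or.inr ⟨isSymm_neg h, h'⟩)
  have hsN12 : ((-χ₁).IsSymm ∧ (-χ₂).IsSymm) ∨ ((-χ₁).IsSymm ∧ χ₃.IsSymm) ∨
      ((-χ₂).IsSymm ∧ χ₃.IsSymm) := by
    rcases hsym with ⟨h, h'⟩ | ⟨h, h'⟩ | ⟨h, h'⟩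
    · exact Or.inl ⟨isSymm_neg h, isSymm_neg h'⟩
    · exact Or.inr (Or.inl ⟨isSymm_neg h, h'⟩)
    · exact Or.inr (Or.inr ⟨isSymm_neg h, h'⟩)
  rcases hε₁ with rfl | rfl <;> rcases hε₂ with rfl | rfl <;> rcases hε₃ with rfl | rfl <;>
    simp only [one_smul, neg_one_smul]
  · exact flip3 χ₁ χ₂ χ₃ h1 h2 h3 hsym
  · exact flip2 χ₁ χ₂ χ₃ h1 h2 h3 hsym
  · exact (flip3 χ₁ (-χ₂) χ₃ h1 (spm_neg h2) h3 hsN2).trans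
      (flip2 χ₁ χ₂ χ₃ h1 h2 h3 hsym)
  · exact flip1 χ₁ χ₂ χ₃ h1 h2 h3 hsym
  · exact (flip3 (-χ₁) χ₂ χ₃ (spm_neg h1) h2 h3 hsN1).trans
      (flip1 χ₁ χ₂ χ₃ h1 h2 h3 hsym)
  · exact (flip2 (-χ₁) χ₂ χ₃ (spm_neg h1) h2 h3 hsN1).trans
      (flip1 χ₁ χ₂ χ₃ h1 h2 h3 hsym)
  · exact ((flip3 (-χ₁) (-χ₂) χ₃ (spm_neg h1) (spm_neg h2) h3 hsN12).trans
      (flip2 (-χ₁) χ₂ χ₃ (spm_neg h1) h2 h3 hsN1)).trans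
      (flip1 χ₁ χ₂ χ₃ h1 h2 h3 hsym)
end

section
/- Let χ₁ and χ₂ be signed permutation matrices. Then the block antidiagonal patterns [[0,0,0,χ₁],[0,0,χ₂,0],[0,χ₂ᵗ,0,0],[χ₁ᵗ,0,0,0]] and [[0,0,0,χ₁],[0,0,−χ₂,0],[0,−χ₂ᵗ,0,0],[χ₁ᵗ,0,0,0]] are I-Wilf equivalent: for every n ≥ 1, the number of signed involutions in SI_n avoiding the first pattern equals the number avoiding the second. -/
open Matrix

/-!
Call a cell `(i, j)` of a symmetric matrix framed when some occurrence of `χ₁` has all its rows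
above `min i j` and all its columns right of `max i j`. The map negating every framed entry
preserves signed involutions, and it is an involution because it does not change which cells
are framed: every framed cell has an outermost frame, whose own cells are unframed and hence
fixed. A symmetric occurrence of the first pattern is a copy of `χ₁` framing a copy of `χ₂`;
after pushing the copy of `χ₁` outwards to an outermost frame, the map fixes it and negates
the copy of `χ₂`. So the map sends avoiders of one pattern bijectively onto avoiders of the
other.
-/

section Occurrences

variable {m n k l : ℕ}

def IsOccurrence (M : Matrix (Fin m) (Fin n) ℤ) (τ : Matrix (Fin k) (Fin l) ℤ)
    (r : Fin k → Fin m) (c : Fin l → Fin n) : Prop :=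
  StrictMono r ∧ StrictMono c ∧ ∀ i j, M (r i) (c j) = τ i j

def HasNonzeroLines (A : Matrix (Fin k) (Fin l) ℤ) : Prop :=
  (∀ i, ∃ j, A i j ≠ 0) ∧ ∀ j, ∃ i, A i j ≠ 0

theorem IsSignedPermMatrix.hasNonzeroLines {A : Matrix (Fin k) (Fin k) ℤ}
    (hA : IsSignedPermMatrix A) : HasNonzeroLines A :=
  ⟨fun i => (hA.2.1 i).exists, fun j => (hA.2.2 j).exists⟩

theorem HasNonzeroLines.neg {A : Matrix (Fin k) (Fin l) ℤ} (hA : HasNonzeroLines A) :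
    HasNonzeroLines (-A) := by
  simpa only [HasNonzeroLines, neg_apply, neg_ne_zero] using hA

theorem Fin.castAdd_lt_natAdd (i : Fin k) (j : Fin l) : castAdd l i < natAdd k j := by
  rw [Fin.lt_def]; simp; omega

theorem strictMono_append {α : Type*} [Preorder α] {u : Fin k → α} {v : Fin l → α}
    (hu : StrictMono u) (hv : StrictMono v) (huv : ∀ i j, u i < v j) :
    StrictMono (Fin.append u v) := by
  intro i j hij
  induction i using Fin.addCases with
  | left i =>
    induction j using Fin.addCases with
    | left j => simpa using hu ((Fin.strictMono_castAdd l).lt_iff_lt.mp hij)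
    | right j => simpa using huv i j
  | right i =>
    induction j using Fin.addCases with
    | left j => exact absurd hij (Fin.castAdd_lt_natAdd j i).asymm
    | right j => simpa using hv ((Fin.strictMono_natAdd k).lt_iff_lt.mp hij)

theorem IsSignedPermMatrix.isOccurrence_of_ne_zero {M : Matrix (Fin n) (Fin n) ℤ}
    {τ : Matrix (Fin k) (Fin l) ℤ} {r : Fin k → Fin n} {c : Fin l → Fin n}
    (hM : IsSignedPermMatrix M) (hτ : ∀ i, ∃ j, τ i j ≠ 0) (hr : StrictMono r)
    (hc : StrictMono c) (h : ∀ i j, τ i j ≠ 0 → M (r i) (c j) = τ i j) :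
    IsOccurrence M τ r c := by
  refine ⟨hr, hc, fun i j => ?_⟩
  by_cases hij : τ i j = 0
  · obtain ⟨j₀, hj₀⟩ := hτ i
    rw [hij]
    by_contra hne
    have : c j = c j₀ := (hM.2.1 (r i)).unique hne (by rwa [h i j₀ hj₀])
    exact hj₀ (hc.injective this ▸ hij)
  · exact h i j hij

end Occurrences

section Blocks

variable {k a b : ℕ}

@[simp] theorem primePat_castAdd_castAdd (σ : Matrix (Fin k) (Fin k) ℤ) (i j : Fin k) :
    primePat σ (Fin.castAdd k i) (Fin.castAdd k j) = 0 := by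
  simp [primePat, -Fin.natAdd_eq_addNat]

@[simp] theorem primePat_castAdd_natAdd (σ : Matrix (Fin k) (Fin k) ℤ) (i j : Fin k) :
    primePat σ (Fin.castAdd k i) (Fin.natAdd k j) = σ i j := by
  simp [primePat, -Fin.natAdd_eq_addNat]

@[simp] theorem primePat_natAdd_castAdd (σ : Matrix (Fin k) (Fin k) ℤ) (i j : Fin k) :
    primePat σ (Fin.natAdd k i) (Fin.castAdd k j) = σ j i := by
  simp [primePat, -Fin.natAdd_eq_addNat]

@[simp] theorem primePat_natAdd_natAdd (σ : Matrix (Fin k) (Fin k) ℤ) (i j : Fin k) :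
    primePat σ (Fin.natAdd k i) (Fin.natAdd k j) = 0 := by
  simp [primePat, -Fin.natAdd_eq_addNat]

def antiBlockColL (t : Fin b) : Fin (a + b) := Fin.cast (Nat.add_comm b a) (Fin.castAdd a t)

def antiBlockColR (q : Fin a) : Fin (a + b) := Fin.cast (Nat.add_comm b a) (Fin.natAdd b q)

theorem antiBlockColL_lt_antiBlockColR (t : Fin b) (q : Fin a) :
    (antiBlockColL t : Fin (a + b)) < antiBlockColR q := by
  simp [antiBlockColL, antiBlockColR, Fin.lt_def]; omega

theorem antiBlockCol_cases (j : Fin (a + b)) :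
    (∃ t, j = antiBlockColL t) ∨ ∃ q, j = antiBlockColR q := by
  obtain ⟨j, rfl⟩ : ∃ j' : Fin (b + a), Fin.cast (Nat.add_comm b a) j' = j :=
    ⟨Fin.cast (Nat.add_comm a b) j, by simp⟩
  induction j using Fin.addCases with
  | left t => exact Or.inl ⟨t, rfl⟩
  | right q => exact Or.inr ⟨q, rfl⟩

variable (A : Matrix (Fin a) (Fin a) ℤ) (B : Matrix (Fin b) (Fin b) ℤ)

@[simp] theorem antiBlock2_castAdd_antiBlockColL (p : Fin a) (t : Fin b) :
    antiBlock2 A B (Fin.castAdd b p) (antiBlockColL t) = 0 := by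
  simp [antiBlock2, antiBlockColL]

@[simp] theorem antiBlock2_castAdd_antiBlockColR (p q : Fin a) :
    antiBlock2 A B (Fin.castAdd b p) (antiBlockColR q) = A p q := by
  simp [antiBlock2, antiBlockColR]

@[simp] theorem antiBlock2_natAdd_antiBlockColL (s t : Fin b) :
    antiBlock2 A B (Fin.natAdd a s) (antiBlockColL t) = B s t := by
  simp [antiBlock2, antiBlockColL]

@[simp] theorem antiBlock2_natAdd_antiBlockColR (s : Fin b) (q : Fin a) :
    antiBlock2 A B (Fin.natAdd a s) (antiBlockColR q) = 0 := by
  simp [antiBlock2, antiBlockColR]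

end Blocks

section AboveDiagonal

variable {n k : ℕ} {M : Matrix (Fin n) (Fin n) ℤ}

theorem containsPattern_primePat_iff (hM : IsSignedPermMatrix M) (hs : M.IsSymm)
    {σ : Matrix (Fin k) (Fin k) ℤ} (hσ : HasNonzeroLines σ) :
    ContainsPattern M (primePat σ) ↔ ∃ u v, IsOccurrence M σ u v ∧ ∀ i j, u i < v j := by
  constructor
  · rintro ⟨r, c, hr, hc, hcell⟩
    by_cases habove : ∀ i j, r (Fin.castAdd k i) < c (Fin.natAdd k j)
    · refine ⟨_, _, ⟨hr.comp (Fin.strictMono_castAdd k), hc.comp (Fin.strictMono_natAdd k),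
        fun i j => ?_⟩, habove⟩
      exact (hcell _ _).trans (primePat_castAdd_natAdd σ i j)
    · -- otherwise the lower-left block, reflected through the diagonal, lies above it
      push Not at habove
      obtain ⟨i₀, j₀, h₀⟩ := habove
      refine ⟨_, _, ⟨hc.comp (Fin.strictMono_castAdd k), hr.comp (Fin.strictMono_natAdd k),
        fun i j => ?_⟩, fun i j => ?_⟩
      · exact (hs.apply _ _).trans ((hcell _ _).trans (primePat_natAdd_castAdd σ j i))
      · calc c (Fin.castAdd k i) < c (Fin.natAdd k j₀) := hc (Fin.castAdd_lt_natAdd i j₀)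
          _ ≤ r (Fin.castAdd k i₀) := h₀
          _ < r (Fin.natAdd k j) := hr (Fin.castAdd_lt_natAdd i₀ j)
  · rintro ⟨u, v, ⟨hu, hv, hcell⟩, huv⟩
    have hmono := strictMono_append hu hv huv
    refine ⟨_, _, hM.isOccurrence_of_ne_zero (fun i => ?_) hmono hmono fun i j hij => ?_⟩
    · induction i using Fin.addCases with
      | left i =>
        obtain ⟨j, hj⟩ := hσ.1 i
        exact ⟨Fin.natAdd k j, by rwa [primePat_castAdd_natAdd]⟩
      | right i =>
        obtain ⟨j, hj⟩ := hσ.2 i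
        exact ⟨Fin.castAdd k j, by rwa [primePat_natAdd_castAdd]⟩
    · induction i using Fin.addCases <;> induction j using Fin.addCases <;>
        simp_all only [primePat_castAdd_castAdd, primePat_castAdd_natAdd, primePat_natAdd_castAdd,
          primePat_natAdd_natAdd, Fin.append_left, Fin.append_right, hs.apply, ne_eq,
          not_true_eq_false]

end AboveDiagonal

section Frames

variable {n a : ℕ} {χ : Matrix (Fin a) (Fin a) ℤ} {M : Matrix (Fin n) (Fin n) ℤ}

def Encloses (x y : Fin a → Fin n) (i j : Fin n) : Prop :=
  (∀ p, x p < i ∧ x p < j) ∧ ∀ q, i < y q ∧ j < y q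

theorem Encloses.symm {x y : Fin a → Fin n} {i j : Fin n} (h : Encloses x y i j) :
    Encloses x y j i :=
  ⟨fun p => (h.1 p).symm, fun q => (h.2 q).symm⟩

theorem Encloses.trans {x y x' y' : Fin a → Fin n} {p q : Fin a} {i j : Fin n}
    (h' : Encloses x' y' (x p) (y q)) (h : Encloses x y i j) : Encloses x' y' i j :=
  ⟨fun p' => ⟨(h'.1 p').1.trans (h.1 p).1, (h'.1 p').1.trans (h.1 p).2⟩,
    fun q' => ⟨(h.2 q).1.trans (h'.2 q').2, (h.2 q).2.trans (h'.2 q').2⟩⟩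

def Framed (χ : Matrix (Fin a) (Fin a) ℤ) (M : Matrix (Fin n) (Fin n) ℤ) (i j : Fin n) : Prop :=
  ∃ x y, IsOccurrence M χ x y ∧ Encloses x y i j

theorem Framed.symm {i j : Fin n} (h : Framed χ M i j) : Framed χ M j i :=
  let ⟨x, y, hocc, henc⟩ := h
  ⟨x, y, hocc, henc.symm⟩

theorem exists_unframed_of_outward_closed {P : (Fin a → Fin n) → (Fin a → Fin n) → Prop}
    (hP : ∀ ⦃x y x' y' p q⦄, P x y → IsOccurrence M χ x' y' → Encloses x' y' (x p) (y q) →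
      P x' y')
    {x y : Fin a → Fin n} (h : P x y) :
    ∃ x y, P x y ∧ ∀ p q, ¬ Framed χ M (x p) (y q) := by
  suffices H : ∀ N, ∀ x y, P x y → (∀ p, (x p : ℕ) < N) →
      ∃ x y, P x y ∧ ∀ p q, ¬ Framed χ M (x p) (y q) from
    H n x y h fun p => (x p).isLt
  intro N
  induction N using Nat.strong_induction_on with
  | _ N ih =>
    intro x y hxy hN
    by_cases hfr : ∃ p q, Framed χ M (x p) (y q)
    · obtain ⟨p, q, x', y', hocc, henc⟩ := hfr
      exact ih (x p) (hN p) x' y' (hP hxy hocc henc) fun p' => (henc.1 p').1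
    · push Not at hfr
      exact ⟨x, y, hxy, hfr⟩

theorem Framed.exists_unframed {i j : Fin n} (h : Framed χ M i j) :
    ∃ x y, (IsOccurrence M χ x y ∧ Encloses x y i j) ∧ ∀ p q, ¬ Framed χ M (x p) (y q) :=
  let ⟨_, _, hocc, henc⟩ := h
  exists_unframed_of_outward_closed (fun _ _ _ _ _ _ hxy hocc' henc' => ⟨hocc', henc'.trans hxy.2⟩)
    ⟨hocc, henc⟩

open scoped Classical in
noncomputable def negFramed (χ : Matrix (Fin a) (Fin a) ℤ) (M : Matrix (Fin n) (Fin n) ℤ) :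
    Matrix (Fin n) (Fin n) ℤ :=
  Matrix.of fun i j => if Framed χ M i j then -M i j else M i j

theorem negFramed_apply_of_framed {i j : Fin n} (h : Framed χ M i j) :
    negFramed χ M i j = -M i j := by
  simp [negFramed, h]

theorem negFramed_apply_of_not_framed {i j : Fin n} (h : ¬ Framed χ M i j) :
    negFramed χ M i j = M i j := by
  simp [negFramed, h]

theorem negFramed_ne_zero_iff {i j : Fin n} : negFramed χ M i j ≠ 0 ↔ M i j ≠ 0 := by
  by_cases h : Framed χ M i j
  · rw [negFramed_apply_of_framed h, neg_ne_zero]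
  · rw [negFramed_apply_of_not_framed h]

theorem isOccurrence_negFramed_iff {k l : ℕ} {τ : Matrix (Fin k) (Fin l) ℤ} {r : Fin k → Fin n}
    {c : Fin l → Fin n} (h : ∀ i j, ¬ Framed χ M (r i) (c j)) :
    IsOccurrence (negFramed χ M) τ r c ↔ IsOccurrence M τ r c := by
  simp only [IsOccurrence, negFramed_apply_of_not_framed (h _ _)]

/-- An outermost frame keeps its entries under `negFramed`, and a frame in `negFramed χ M`
either is one in `M` or has a cell framed in `M`. -/
theorem framed_negFramed_iff {i j : Fin n} : Framed χ (negFramed χ M) i j ↔ Framed χ M i j := by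
  constructor
  · rintro ⟨x, y, hocc, henc⟩
    by_cases hfr : ∃ p q, Framed χ M (x p) (y q)
    · obtain ⟨p, q, x', y', hocc', henc'⟩ := hfr
      exact ⟨x', y', hocc', henc'.trans henc⟩
    · push Not at hfr
      exact ⟨x, y, (isOccurrence_negFramed_iff hfr).mp hocc, henc⟩
  · intro h
    obtain ⟨x, y, ⟨hocc, henc⟩, hunf⟩ := h.exists_unframed
    exact ⟨x, y, (isOccurrence_negFramed_iff hunf).mpr hocc, henc⟩

theorem negFramed_involutive (χ : Matrix (Fin a) (Fin a) ℤ) :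
    Function.Involutive (negFramed (n := n) χ) := by
  intro M
  ext i j
  by_cases h : Framed χ M i j
  · rw [negFramed_apply_of_framed (framed_negFramed_iff.mpr h), negFramed_apply_of_framed h,
      neg_neg]
  · rw [negFramed_apply_of_not_framed (mt framed_negFramed_iff.mp h),
      negFramed_apply_of_not_framed h]

theorem Matrix.IsSymm.negFramed (hs : M.IsSymm) : (negFramed χ M).IsSymm := by
  refine Matrix.IsSymm.ext fun i j => ?_
  by_cases h : Framed χ M i j
  · rw [negFramed_apply_of_framed h, negFramed_apply_of_framed h.symm, hs.apply]
  · rw [negFramed_apply_of_not_framed h, negFramed_apply_of_not_framed (mt Framed.symm h), hs.apply]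

theorem IsSignedPermMatrix.negFramed (hM : IsSignedPermMatrix M) :
    IsSignedPermMatrix (negFramed χ M) := by
  refine ⟨fun i j => ?_, by simpa only [negFramed_ne_zero_iff] using hM.2⟩
  by_cases h : Framed χ M i j
  · rw [negFramed_apply_of_framed h]
    rcases hM.1 i j with h' | h' | h' <;> simp [h']
  · rw [negFramed_apply_of_not_framed h]
    exact hM.1 i j

theorem isSignedPermMatrix_negFramed_iff :
    IsSignedPermMatrix (negFramed χ M) ↔ IsSignedPermMatrix M :=
  ⟨fun h => negFramed_involutive χ M ▸ h.negFramed, IsSignedPermMatrix.negFramed⟩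

theorem isSymm_negFramed_iff : (negFramed χ M).IsSymm ↔ M.IsSymm :=
  ⟨fun h => negFramed_involutive χ M ▸ h.negFramed, Matrix.IsSymm.negFramed⟩

end Frames

section AntiBlock

variable {n a b : ℕ} {M : Matrix (Fin n) (Fin n) ℤ}

/-- An occurrence of `antiBlock2 A B` above the diagonal, split into the rows `x`, `u` and
columns `y`, `v` of its blocks `A` and `B`. -/
def IsAntiBlockOccurrence (M : Matrix (Fin n) (Fin n) ℤ) (A : Matrix (Fin a) (Fin a) ℤ)
    (B : Matrix (Fin b) (Fin b) ℤ) (x y : Fin a → Fin n) (u v : Fin b → Fin n) : Prop :=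
  IsOccurrence M A x y ∧ IsOccurrence M B u v ∧ (∀ p q, x p < y q) ∧ (∀ s t, u s < v t) ∧
    ∀ s t, Encloses x y (u s) (v t)

theorem strictMono_antiBlockColL : StrictMono (antiBlockColL : Fin b → Fin (a + b)) :=
  (Fin.castOrderIso (Nat.add_comm b a)).strictMono.comp (Fin.strictMono_castAdd a)

theorem strictMono_antiBlockColR : StrictMono (antiBlockColR : Fin a → Fin (a + b)) :=
  (Fin.castOrderIso (Nat.add_comm b a)).strictMono.comp (Fin.strictMono_natAdd b)

theorem exists_isAntiBlockOccurrence_iff (hM : IsSignedPermMatrix M)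
    {A : Matrix (Fin a) (Fin a) ℤ} {B : Matrix (Fin b) (Fin b) ℤ}
    (hAB : ∀ i, ∃ j, antiBlock2 A B i j ≠ 0) :
    (∃ r c, IsOccurrence M (antiBlock2 A B) r c ∧ ∀ i j, r i < c j) ↔
      ∃ x y u v, IsAntiBlockOccurrence M A B x y u v := by
  constructor
  · rintro ⟨r, c, ⟨hr, hc, hcell⟩, hrc⟩
    refine ⟨fun p => r (Fin.castAdd b p), fun q => c (antiBlockColR q),
      fun s => r (Fin.natAdd a s), fun t => c (antiBlockColL t),
      ⟨hr.comp (Fin.strictMono_castAdd b), hc.comp strictMono_antiBlockColR,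
        fun p q => (hcell _ _).trans (antiBlock2_castAdd_antiBlockColR A B p q)⟩,
      ⟨hr.comp (Fin.strictMono_natAdd a), hc.comp strictMono_antiBlockColL,
        fun s t => (hcell _ _).trans (antiBlock2_natAdd_antiBlockColL A B s t)⟩,
      fun _ _ => hrc _ _, fun _ _ => hrc _ _,
      fun s t => ⟨fun p => ⟨hr (Fin.castAdd_lt_natAdd p s), hrc _ _⟩,
        fun q => ⟨hrc _ _, hc (antiBlockColL_lt_antiBlockColR t q)⟩⟩⟩
  · rintro ⟨x, y, u, v, ⟨hx, hy, hA⟩, ⟨hu, hv, hB⟩, hxy, huv, henc⟩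
    have hxu : ∀ p s, x p < u s := fun p s => ((henc s s).1 p).1
    have hxv : ∀ p t, x p < v t := fun p t => ((henc t t).1 p).2
    have huy : ∀ s q, u s < y q := fun s q => ((henc s s).2 q).1
    have hvy : ∀ t q, v t < y q := fun t q => ((henc t t).2 q).2
    have hc : StrictMono fun j => Fin.append v y (Fin.cast (Nat.add_comm a b) j) :=
      (strictMono_append hv hy hvy).comp (Fin.castOrderIso (Nat.add_comm a b)).strictMono
    have hcL (t : Fin b) :
        Fin.append v y (Fin.cast (Nat.add_comm a b) (antiBlockColL t)) = v t := by
      simp [antiBlockColL]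
    have hcR (q : Fin a) :
        Fin.append v y (Fin.cast (Nat.add_comm a b) (antiBlockColR q)) = y q := by
      simp [antiBlockColR]
    refine ⟨_, _, hM.isOccurrence_of_ne_zero hAB (strictMono_append hx hu hxu) hc
      fun i j hij => ?_, fun i j => ?_⟩ <;>
    induction i using Fin.addCases <;>
    rcases antiBlockCol_cases j with ⟨t, rfl⟩ | ⟨q, rfl⟩ <;>
    simp_all

theorem HasNonzeroLines.antiBlock2 {A : Matrix (Fin a) (Fin a) ℤ}
    {B : Matrix (Fin b) (Fin b) ℤ} (hA : HasNonzeroLines A) (hB : HasNonzeroLines B) :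
    HasNonzeroLines (antiBlock2 A B) := by
  refine ⟨fun i => ?_, fun j => ?_⟩
  · induction i using Fin.addCases with
    | left p => obtain ⟨q, hq⟩ := hA.1 p; exact ⟨antiBlockColR q, by simpa using hq⟩
    | right s => obtain ⟨t, ht⟩ := hB.1 s; exact ⟨antiBlockColL t, by simpa using ht⟩
  · rcases antiBlockCol_cases j with ⟨t, rfl⟩ | ⟨q, rfl⟩
    · obtain ⟨s, hs⟩ := hB.2 t; exact ⟨Fin.natAdd a s, by simpa using hs⟩
    · obtain ⟨p, hp⟩ := hA.2 q; exact ⟨Fin.castAdd b p, by simpa using hp⟩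

theorem containsPattern_primePat_antiBlock2_iff (hM : IsSignedPermMatrix M) (hs : M.IsSymm)
    {A : Matrix (Fin a) (Fin a) ℤ} {B : Matrix (Fin b) (Fin b) ℤ} (hA : HasNonzeroLines A)
    (hB : HasNonzeroLines B) :
    ContainsPattern M (primePat (antiBlock2 A B)) ↔
      ∃ x y u v, IsAntiBlockOccurrence M A B x y u v := by
  rw [containsPattern_primePat_iff hM hs (hA.antiBlock2 hB),
    exists_isAntiBlockOccurrence_iff hM (hA.antiBlock2 hB).1]

/-- `negFramed χ₁` negates the `χ₂`-block once its `χ₁`-frame has been pushed outermost. -/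
theorem IsAntiBlockOccurrence.exists_negFramed {χ₁ : Matrix (Fin a) (Fin a) ℤ}
    {χ₂ : Matrix (Fin b) (Fin b) ℤ} {x y : Fin a → Fin n} {u v : Fin b → Fin n}
    (h : IsAntiBlockOccurrence M χ₁ χ₂ x y u v) :
    ∃ x' y', IsAntiBlockOccurrence (negFramed χ₁ M) χ₁ (-χ₂) x' y' u v := by
  obtain ⟨hA, hB, hxy, huv, henc⟩ := h
  obtain ⟨x', y', ⟨hA', hxy', henc'⟩, hunf⟩ :=
    exists_unframed_of_outward_closed (χ := χ₁) (M := M)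
      (P := fun x y => IsOccurrence M χ₁ x y ∧ (∀ p q, x p < y q) ∧
        ∀ s t, Encloses x y (u s) (v t))
      (fun _ _ _ _ _ _ hP hocc henc =>
        ⟨hocc, fun p' q' => (henc.1 p').2.trans (henc.2 q').2,
          fun s t => henc.trans (hP.2.2 s t)⟩)
      ⟨hA, hxy, henc⟩
  refine ⟨x', y', (isOccurrence_negFramed_iff hunf).mpr hA', ⟨hB.1, hB.2.1, fun s t => ?_⟩,
    hxy', huv, henc'⟩
  rw [negFramed_apply_of_framed ⟨x', y', hA', henc' s t⟩, hB.2.2, neg_apply]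

theorem containsPattern_negFramed_iff (hM : IsSignedPermMatrix M) (hs : M.IsSymm)
    {χ₁ : Matrix (Fin a) (Fin a) ℤ} {χ₂ : Matrix (Fin b) (Fin b) ℤ} (h₁ : HasNonzeroLines χ₁)
    (h₂ : HasNonzeroLines χ₂) :
    ContainsPattern (negFramed χ₁ M) (primePat (antiBlock2 χ₁ (-χ₂))) ↔
      ContainsPattern M (primePat (antiBlock2 χ₁ χ₂)) := by
  rw [containsPattern_primePat_antiBlock2_iff hM.negFramed hs.negFramed h₁ h₂.neg,
    containsPattern_primePat_antiBlock2_iff hM hs h₁ h₂]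
  constructor
  · rintro ⟨x, y, u, v, h⟩
    obtain ⟨x', y', h'⟩ := h.exists_negFramed
    rw [negFramed_involutive, neg_neg] at h'
    exact ⟨x', y', u, v, h'⟩
  · rintro ⟨x, y, u, v, h⟩
    obtain ⟨x', y', h'⟩ := h.exists_negFramed
    exact ⟨x', y', u, v, h'⟩

end AntiBlock

/-- [[0,0,0,χ₁],[0,0,χ₂,0],[0,χ₂ᵗ,0,0],[χ₁ᵗ,0,0,0]] and
[[0,0,0,χ₁],[0,0,−χ₂,0],[0,−χ₂ᵗ,0,0],[χ₁ᵗ,0,0,0]] are I-Wilf equivalent. -/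
theorem stmt13 {a b : ℕ} (χ₁ : Matrix (Fin a) (Fin a) ℤ) (χ₂ : Matrix (Fin b) (Fin b) ℤ)
    (h1 : IsSignedPermMatrix χ₁) (h2 : IsSignedPermMatrix χ₂) :
    ∀ n : ℕ, 1 ≤ n →
      SIAvoidCount n (primePat (antiBlock2 χ₁ χ₂)) =
      SIAvoidCount n (primePat (antiBlock2 χ₁ (-χ₂))) := by
  intro n _
  have hinv := negFramed_involutive (n := n) χ₁
  refine Eq.symm ?_
  rw [SIAvoidCount, ← Set.ncard_image_of_injective _ hinv.injective,
    hinv.image_eq_preimage_symm]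
  congr 1
  ext M
  simp only [Set.mem_preimage, Set.mem_ofPred_eq, isSignedPermMatrix_negFramed_iff,
    isSymm_negFramed_iff]
  exact and_congr_right fun hM => and_congr_right fun hs =>
    not_congr (containsPattern_negFramed_iff hM hs h1.hasNonzeroLines h2.hasNonzeroLines)
end

section
/- Let χ₁ and χ₂ be signed permutation matrices. Then the block patterns [[0,0,0,0,χ₁],[0,0,0,χ₂,0],[0,0,1,0,0],[0,χ₂ᵗ,0,0,0],[χ₁ᵗ,0,0,0,0]] and [[0,0,0,0,χ₁],[0,0,0,−χ₂,0],[0,0,1,0,0],[0,−χ₂ᵗ,0,0,0],[χ₁ᵗ,0,0,0,0]] (with a single entry 1 in the central block) are I-Wilf equivalent: for every n ≥ 1, the number of signed involutions in SI_n avoiding the first pattern equals the number avoiding the second. -/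
open Matrix

namespace Stmt14Aux

attribute [local instance] Classical.propDecidable

variable {n a b : ℕ}

/-- A χ₁-occurrence spanning the interval `(i0, j0)`. -/
def SpanOcc (χ₁ : Matrix (Fin a) (Fin a) ℤ) (M : Matrix (Fin n) (Fin n) ℤ)
    (i0 j0 : Fin n) : Prop :=
  ∃ x y : Fin a → Fin n, StrictMono x ∧ StrictMono y ∧
    (∀ t, x t < i0) ∧ (∀ t, j0 < y t) ∧ (∀ s t, M (x s) (y t) = χ₁ s t)

/-- There is a `+1` entry strictly inside the interval `(i, j)`. -/
def PosIn (M : Matrix (Fin n) (Fin n) ℤ) (i j : Fin n) : Prop :=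
  ∃ p q : Fin n, i < p ∧ p < j ∧ i < q ∧ q < j ∧ M p q = 1

def FlipCond (χ₁ : Matrix (Fin a) (Fin a) ℤ) (M : Matrix (Fin n) (Fin n) ℤ)
    (i j : Fin n) : Prop :=
  i ≠ j ∧ PosIn M (min i j) (max i j) ∧ SpanOcc χ₁ M (min i j) (max i j)

noncomputable def flipMat (χ₁ : Matrix (Fin a) (Fin a) ℤ) (M : Matrix (Fin n) (Fin n) ℤ) :
    Matrix (Fin n) (Fin n) ℤ :=
  Matrix.of fun i j => if FlipCond χ₁ M i j then -M i j else M i j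

variable {χ₁ : Matrix (Fin a) (Fin a) ℤ} {M : Matrix (Fin n) (Fin n) ℤ}

lemma exists_minimal {p : ℕ → Prop} (h : ∃ w, p w) :
    ∃ w, p w ∧ ∀ w', w' < w → ¬ p w' := by
  classical
  exact ⟨Nat.find h, Nat.find_spec h, fun w' hw' => Nat.find_min h hw'⟩

lemma fin_val_min (p q : Fin n) : ((min p q : Fin n) : ℕ) = min (p : ℕ) (q : ℕ) := by
  rcases le_total p q with h | h
  · rw [min_eq_left h, min_eq_left (Fin.le_def.mp h)]
  · rw [min_eq_right h, min_eq_right (Fin.le_def.mp h)]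

lemma fin_val_max (p q : Fin n) : ((max p q : Fin n) : ℕ) = max (p : ℕ) (q : ℕ) := by
  rcases le_total p q with h | h
  · rw [max_eq_right h, max_eq_right (Fin.le_def.mp h)]
  · rw [max_eq_left h, max_eq_left (Fin.le_def.mp h)]

lemma flipMat_apply (i j : Fin n) :
    flipMat χ₁ M i j = if FlipCond χ₁ M i j then -M i j else M i j := rfl

lemma flipMat_eq_zero_iff (i j : Fin n) : flipMat χ₁ M i j = 0 ↔ M i j = 0 := by
  rw [flipMat_apply]
  split <;> simp

lemma flipCond_comm (i j : Fin n) : FlipCond χ₁ M i j ↔ FlipCond χ₁ M j i := by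
  unfold FlipCond
  rw [min_comm, max_comm, ne_comm]

lemma flipMat_isSymm (hs : M.IsSymm) : (flipMat χ₁ M).IsSymm := by
  have hsym : ∀ i j, M j i = M i j := fun i j => by
    have := congrFun (congrFun hs i) j
    simpa using this
  apply Matrix.IsSymm.ext
  intro i j
  rw [flipMat_apply, flipMat_apply, hsym i j, flipCond_comm]

lemma flipMat_spm (hM : IsSignedPermMatrix M) : IsSignedPermMatrix (flipMat χ₁ M) := by
  obtain ⟨he, hr, hc⟩ := hM
  refine ⟨fun i j => ?_, fun i => ?_, fun j => ?_⟩
  · rw [flipMat_apply]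
    rcases he i j with h | h | h <;> rw [h] <;> split <;> simp
  · refine (existsUnique_congr fun j => ?_).mpr (hr i)
    rw [ne_eq, ne_eq, flipMat_eq_zero_iff]
  · refine (existsUnique_congr fun i => ?_).mpr (hc j)
    rw [ne_eq, ne_eq, flipMat_eq_zero_iff]

lemma posIn_flip_iff (i j : Fin n) : PosIn (flipMat χ₁ M) i j ↔ PosIn M i j := by
  constructor
  · rintro ⟨p, q, h1, h2, h3, h4, hpq⟩
    rw [flipMat_apply] at hpq
    split at hpq
    · rename_i hcond
      obtain ⟨-, ⟨p', q', g1, g2, g3, g4, hpq'⟩, -⟩ := hcond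
      have hip : i < min p q := lt_min h1 h3
      have hjp : max p q < j := max_lt h2 h4
      exact ⟨p', q', lt_trans hip g1, lt_trans g2 hjp, lt_trans hip g3, lt_trans g4 hjp, hpq'⟩
    · exact ⟨p, q, h1, h2, h3, h4, hpq⟩
  · rintro hpos
    have hex : ∃ w, ∃ p q : Fin n, i < p ∧ p < j ∧ i < q ∧ q < j ∧ M p q = 1 ∧
        max (p : ℕ) (q : ℕ) - min (p : ℕ) (q : ℕ) = w := by
      obtain ⟨p, q, h1, h2, h3, h4, hpq⟩ := hpos
      exact ⟨_, p, q, h1, h2, h3, h4, hpq, rfl⟩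
    obtain ⟨w, ⟨p, q, h1, h2, h3, h4, hpq, hw⟩, hmin⟩ := exists_minimal hex
    have hnc : ¬ FlipCond χ₁ M p q := by
      rintro ⟨hne, ⟨p', q', g1, g2, g3, g4, hpq'⟩, -⟩
      have v1 : ((min p q : Fin n) : ℕ) = min (p:ℕ) q := fin_val_min p q
      have v2 : ((max p q : Fin n) : ℕ) = max (p:ℕ) q := fin_val_max p q
      have g1' := Fin.lt_def.mp g1
      have g2' := Fin.lt_def.mp g2
      have g3' := Fin.lt_def.mp g3
      have g4' := Fin.lt_def.mp g4
      rw [v1] at g1' g3'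
      rw [v2] at g2' g4'
      have hi1 := Fin.lt_def.mp h1
      have hi2 := Fin.lt_def.mp h2
      have hi3 := Fin.lt_def.mp h3
      have hi4 := Fin.lt_def.mp h4
      refine hmin (max (p' : ℕ) q' - min (p' : ℕ) q') (by omega)
        ⟨p', q', ?_, ?_, ?_, ?_, hpq', rfl⟩ <;> rw [Fin.lt_def] <;> omega
    exact ⟨p, q, h1, h2, h3, h4, by rw [flipMat_apply, if_neg hnc]; exact hpq⟩

lemma spanOcc_trivial (ha : a = 0) (χ : Matrix (Fin a) (Fin a) ℤ)
    (N : Matrix (Fin n) (Fin n) ℤ) (i0 j0 : Fin n) : SpanOcc χ N i0 j0 := by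
  subst ha
  exact ⟨fun t => t.elim0, fun t => t.elim0, fun s t h => s.elim0, fun s t h => s.elim0,
    fun t => t.elim0, fun t => t.elim0, fun s => s.elim0⟩

lemma spanOcc_flip_iff (i0 j0 : Fin n) (hij : i0 < j0) :
    SpanOcc χ₁ (flipMat χ₁ M) i0 j0 ↔ SpanOcc χ₁ M i0 j0 := by
  rcases Nat.eq_zero_or_pos a with ha | ha
  · exact iff_of_true (spanOcc_trivial ha _ _ _ _) (spanOcc_trivial ha _ _ _ _)
  obtain ⟨m, rfl⟩ : ∃ m, a = m + 1 := ⟨a - 1, by omega⟩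
  constructor
  · rintro ⟨x, y, hx, hy, hxi, hyj, hent⟩
    by_cases hc : ∃ s t, χ₁ s t ≠ 0 ∧ FlipCond χ₁ M (x s) (y t)
    · obtain ⟨s, t, -, -, -, hspan⟩ := hc
      have hxy : x s < y t := lt_trans (lt_trans (hxi s) hij) (hyj t)
      rw [min_eq_left (le_of_lt hxy), max_eq_right (le_of_lt hxy)] at hspan
      obtain ⟨x', y', hx', hy', hxi', hyj', hent'⟩ := hspan
      exact ⟨x', y', hx', hy', fun u => lt_trans (hxi' u) (hxi s),
        fun u => lt_trans (hyj t) (hyj' u), hent'⟩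
    · push_neg at hc
      refine ⟨x, y, hx, hy, hxi, hyj, fun s t => ?_⟩
      by_cases hz : χ₁ s t = 0
      · rw [hz]
        have := hent s t
        rw [hz, flipMat_eq_zero_iff] at this
        exact this
      · have := hent s t
        rw [flipMat_apply, if_neg (hc s t hz)] at this
        exact this
  · rintro ⟨x, y, hx, hy, hxi, hyj, hent⟩
    have hex : ∃ w, ∃ x' y' : Fin (m+1) → Fin n, StrictMono x' ∧ StrictMono y' ∧
        (∀ t, x' t < i0) ∧ (∀ t, j0 < y' t) ∧ (∀ s t, M (x' s) (y' t) = χ₁ s t) ∧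
        ((x' (Fin.last m) : ℕ) = w) :=
      ⟨_, x, y, hx, hy, hxi, hyj, hent, rfl⟩
    obtain ⟨w, ⟨x', y', hx', hy', hxi', hyj', hent', hw⟩, hmin⟩ := exists_minimal hex
    have hnc : ∀ s t, χ₁ s t ≠ 0 → ¬ FlipCond χ₁ M (x' s) (y' t) := by
      intro s t hst
      rintro ⟨-, -, hspan⟩
      have hxy : x' s < y' t := lt_trans (lt_trans (hxi' s) hij) (hyj' t)
      rw [min_eq_left (le_of_lt hxy), max_eq_right (le_of_lt hxy)] at hspan
      obtain ⟨x'', y'', hx'', hy'', hxi'', hyj'', hent''⟩ := hspan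
      have hlast : x'' (Fin.last m) < x' (Fin.last m) :=
        lt_of_lt_of_le (hxi'' _) (hx'.monotone (Fin.le_last s))
      refine hmin (x'' (Fin.last m) : ℕ) ?_
        ⟨x'', y'', hx'', hy'', fun u => lt_trans (hxi'' u) (hxi' s),
          fun u => lt_trans (hyj' t) (hyj'' u), hent'', rfl⟩
      rw [← hw]
      exact Fin.lt_def.mp hlast
    refine ⟨x', y', hx', hy', hxi', hyj', fun s t => ?_⟩
    by_cases hz : χ₁ s t = 0
    · rw [hz, flipMat_eq_zero_iff]
      rw [← hz]
      exact hent' s t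
    · rw [flipMat_apply, if_neg (hnc s t hz)]
      exact hent' s t

lemma flipCond_flip_iff (i j : Fin n) :
    FlipCond χ₁ (flipMat χ₁ M) i j ↔ FlipCond χ₁ M i j := by
  by_cases hne : i = j
  · subst hne
    constructor <;> rintro ⟨h, -, -⟩ <;> exact absurd rfl h
  · have hmm : min i j < max i j := min_lt_max.mpr hne
    unfold FlipCond
    rw [posIn_flip_iff, spanOcc_flip_iff _ _ hmm]

lemma flipMat_flipMat : flipMat χ₁ (flipMat χ₁ M) = M := by
  ext i j
  rw [flipMat_apply]
  by_cases h : FlipCond χ₁ M i j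
  · rw [if_pos ((flipCond_flip_iff i j).mpr h), flipMat_apply, if_pos h, neg_neg]
  · rw [if_neg fun hc => h ((flipCond_flip_iff i j).mp hc), flipMat_apply, if_neg h]


/-! ### Pattern embeddings and entry lemmas -/

def eOut (k : ℕ) : (Fin k ⊕ (Fin 1 ⊕ Fin k)) ≃ Fin (k + (1 + k)) :=
  (Equiv.sumCongr (Equiv.refl (Fin k)) finSumFinEquiv).trans finSumFinEquiv

def eIn' (a b : ℕ) : (Fin b ⊕ Fin a) ≃ Fin (a + b) :=
  finSumFinEquiv.trans (finCongr (Nat.add_comm b a))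

def TA (a b : ℕ) (i : Fin a) : Fin ((a+b) + (1 + (a+b))) :=
  eOut (a+b) (Sum.inl (finSumFinEquiv (Sum.inl i)))

def TB (a b : ℕ) (i : Fin b) : Fin ((a+b) + (1 + (a+b))) :=
  eOut (a+b) (Sum.inl (finSumFinEquiv (Sum.inr i)))

def TM (a b : ℕ) : Fin ((a+b) + (1 + (a+b))) :=
  eOut (a+b) (Sum.inr (Sum.inl 0))

def TBp (a b : ℕ) (j : Fin b) : Fin ((a+b) + (1 + (a+b))) :=
  eOut (a+b) (Sum.inr (Sum.inr (eIn' a b (Sum.inl j))))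

def TAp (a b : ℕ) (j : Fin a) : Fin ((a+b) + (1 + (a+b))) :=
  eOut (a+b) (Sum.inr (Sum.inr (eIn' a b (Sum.inr j))))

lemma TA_val (i : Fin a) : (TA a b i : ℕ) = i := by
  simp [TA, eOut]

lemma TB_val (i : Fin b) : (TB a b i : ℕ) = a + i := by
  simp [TB, eOut]

lemma TM_val : (TM a b : ℕ) = a + b := by
  simp [TM, eOut]

lemma TBp_val (j : Fin b) : (TBp a b j : ℕ) = (a + b) + (1 + j) := by
  simp [TBp, eOut, eIn']

lemma TAp_val (j : Fin a) : (TAp a b j : ℕ) = (a + b) + (1 + (b + j)) := by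
  simp [TAp, eOut, eIn']
  omega

lemma tau_cases (α : Fin ((a+b) + (1 + (a+b)))) :
    (∃ i, α = TA a b i) ∨ (∃ i, α = TB a b i) ∨ α = TM a b ∨
    (∃ j, α = TBp a b j) ∨ (∃ j, α = TAp a b j) := by
  have h : α = eOut (a+b) ((eOut (a+b)).symm α) := ((eOut (a+b)).apply_symm_apply α).symm
  rcases he : (eOut (a+b)).symm α with t | z
  · rw [he] at h
    have ht : t = finSumFinEquiv (finSumFinEquiv.symm t) :=
      (finSumFinEquiv.apply_symm_apply t).symm
    rcases hf : (finSumFinEquiv.symm t : Fin a ⊕ Fin b) with i | i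
    · exact Or.inl ⟨i, by rw [h, ht, hf]; rfl⟩
    · exact Or.inr (Or.inl ⟨i, by rw [h, ht, hf]; rfl⟩)
  · rw [he] at h
    rcases z with z0 | t
    · have : z0 = 0 := Subsingleton.elim z0 0
      exact Or.inr (Or.inr (Or.inl (by rw [h, this]; rfl)))
    · have ht : t = eIn' a b ((eIn' a b).symm t) := ((eIn' a b).apply_symm_apply t).symm
      rcases hf : ((eIn' a b).symm t : Fin b ⊕ Fin a) with j | j
      · exact Or.inr (Or.inr (Or.inr (Or.inl ⟨j, by rw [h, ht, hf]; rfl⟩)))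
      · exact Or.inr (Or.inr (Or.inr (Or.inr ⟨j, by rw [h, ht, hf]; rfl⟩)))

section TauEntries

variable (χ₁ : Matrix (Fin a) (Fin a) ℤ) (χ : Matrix (Fin b) (Fin b) ℤ)

local notation "τ" => doublePrimePat (antiBlock2 χ₁ χ)

lemma tau_AA (i j : Fin a) : τ (TA a b i) (TA a b j) = 0 := by
  simp [doublePrimePat, antiBlock2, TA, eOut, Matrix.reindex_apply, Matrix.submatrix_apply]

lemma tau_AB (i : Fin a) (j : Fin b) : τ (TA a b i) (TB a b j) = 0 := by
  simp [doublePrimePat, antiBlock2, TA, TB, eOut, Matrix.reindex_apply, Matrix.submatrix_apply]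

lemma tau_AM (i : Fin a) : τ (TA a b i) (TM a b) = 0 := by
  simp [doublePrimePat, antiBlock2, TA, TM, eOut, Matrix.reindex_apply, Matrix.submatrix_apply]

lemma tau_ABp (i : Fin a) (j : Fin b) : τ (TA a b i) (TBp a b j) = 0 := by
  simp [doublePrimePat, antiBlock2, TA, TBp, eOut, eIn', Matrix.reindex_apply,
    Matrix.submatrix_apply]

lemma tau_AAp (i j : Fin a) : τ (TA a b i) (TAp a b j) = χ₁ i j := by
  simp [doublePrimePat, antiBlock2, TA, TAp, eOut, eIn', Matrix.reindex_apply,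
    Matrix.submatrix_apply]

lemma tau_BA (i : Fin b) (j : Fin a) : τ (TB a b i) (TA a b j) = 0 := by
  simp [doublePrimePat, antiBlock2, TA, TB, eOut, Matrix.reindex_apply, Matrix.submatrix_apply]

lemma tau_BB (i j : Fin b) : τ (TB a b i) (TB a b j) = 0 := by
  simp [doublePrimePat, antiBlock2, TB, eOut, Matrix.reindex_apply, Matrix.submatrix_apply]

lemma tau_BM (i : Fin b) : τ (TB a b i) (TM a b) = 0 := by
  simp [doublePrimePat, antiBlock2, TB, TM, eOut, Matrix.reindex_apply, Matrix.submatrix_apply]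

lemma tau_BBp (i j : Fin b) : τ (TB a b i) (TBp a b j) = χ i j := by
  simp [doublePrimePat, antiBlock2, TB, TBp, eOut, eIn', Matrix.reindex_apply,
    Matrix.submatrix_apply]

lemma tau_BAp (i : Fin b) (j : Fin a) : τ (TB a b i) (TAp a b j) = 0 := by
  simp [doublePrimePat, antiBlock2, TB, TAp, eOut, eIn', Matrix.reindex_apply,
    Matrix.submatrix_apply]

lemma tau_MA (j : Fin a) : τ (TM a b) (TA a b j) = 0 := by
  simp [doublePrimePat, antiBlock2, TA, TM, eOut, Matrix.reindex_apply, Matrix.submatrix_apply]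

lemma tau_MB (j : Fin b) : τ (TM a b) (TB a b j) = 0 := by
  simp [doublePrimePat, antiBlock2, TB, TM, eOut, Matrix.reindex_apply, Matrix.submatrix_apply]

lemma tau_MM : τ (TM a b) (TM a b) = 1 := by
  simp [doublePrimePat, antiBlock2, TM, eOut, Matrix.reindex_apply, Matrix.submatrix_apply,
    Matrix.one_apply_eq]

lemma tau_MBp (j : Fin b) : τ (TM a b) (TBp a b j) = 0 := by
  simp [doublePrimePat, antiBlock2, TM, TBp, eOut, eIn', Matrix.reindex_apply,
    Matrix.submatrix_apply]

lemma tau_MAp (j : Fin a) : τ (TM a b) (TAp a b j) = 0 := by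
  simp [doublePrimePat, antiBlock2, TM, TAp, eOut, eIn', Matrix.reindex_apply,
    Matrix.submatrix_apply]

lemma tau_BpA (i : Fin b) (j : Fin a) : τ (TBp a b i) (TA a b j) = 0 := by
  simp [doublePrimePat, antiBlock2, TA, TBp, eOut, eIn', Matrix.reindex_apply,
    Matrix.submatrix_apply]

lemma tau_BpB (i j : Fin b) : τ (TBp a b i) (TB a b j) = χ j i := by
  simp [doublePrimePat, antiBlock2, TB, TBp, eOut, eIn', Matrix.reindex_apply,
    Matrix.submatrix_apply]

lemma tau_BpM (i : Fin b) : τ (TBp a b i) (TM a b) = 0 := by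
  simp [doublePrimePat, antiBlock2, TM, TBp, eOut, eIn', Matrix.reindex_apply,
    Matrix.submatrix_apply]

lemma tau_BpBp (i j : Fin b) : τ (TBp a b i) (TBp a b j) = 0 := by
  simp [doublePrimePat, antiBlock2, TBp, eOut, eIn', Matrix.reindex_apply,
    Matrix.submatrix_apply]

lemma tau_BpAp (i : Fin b) (j : Fin a) : τ (TBp a b i) (TAp a b j) = 0 := by
  simp [doublePrimePat, antiBlock2, TBp, TAp, eOut, eIn', Matrix.reindex_apply,
    Matrix.submatrix_apply]

lemma tau_ApA (i j : Fin a) : τ (TAp a b i) (TA a b j) = χ₁ j i := by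
  simp [doublePrimePat, antiBlock2, TA, TAp, eOut, eIn', Matrix.reindex_apply,
    Matrix.submatrix_apply]

lemma tau_ApB (i : Fin a) (j : Fin b) : τ (TAp a b i) (TB a b j) = 0 := by
  simp [doublePrimePat, antiBlock2, TB, TAp, eOut, eIn', Matrix.reindex_apply,
    Matrix.submatrix_apply]

lemma tau_ApM (i : Fin a) : τ (TAp a b i) (TM a b) = 0 := by
  simp [doublePrimePat, antiBlock2, TM, TAp, eOut, eIn', Matrix.reindex_apply,
    Matrix.submatrix_apply]

lemma tau_ApBp (i : Fin a) (j : Fin b) : τ (TAp a b i) (TBp a b j) = 0 := by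
  simp [doublePrimePat, antiBlock2, TBp, TAp, eOut, eIn', Matrix.reindex_apply,
    Matrix.submatrix_apply]

lemma tau_ApAp (i j : Fin a) : τ (TAp a b i) (TAp a b j) = 0 := by
  simp [doublePrimePat, antiBlock2, TAp, eOut, eIn', Matrix.reindex_apply,
    Matrix.submatrix_apply]

lemma tau_symm (α β : Fin ((a+b) + (1 + (a+b)))) : τ β α = τ α β := by
  rcases tau_cases α with ⟨i, rfl⟩ | ⟨i, rfl⟩ | rfl | ⟨i, rfl⟩ | ⟨i, rfl⟩ <;>
    rcases tau_cases β with ⟨j, rfl⟩ | ⟨j, rfl⟩ | rfl | ⟨j, rfl⟩ | ⟨j, rfl⟩ <;>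
    simp [tau_AA, tau_AB, tau_AM, tau_ABp, tau_AAp, tau_BA, tau_BB, tau_BM, tau_BBp,
      tau_BAp, tau_MA, tau_MB, tau_MM, tau_MBp, tau_MAp, tau_BpA, tau_BpB, tau_BpM,
      tau_BpBp, tau_BpAp, tau_ApA, tau_ApB, tau_ApM, tau_ApBp, tau_ApAp]

end TauEntries

/-! ### The witness normal form -/

def QWit (χ₁ : Matrix (Fin a) (Fin a) ℤ) (χ : Matrix (Fin b) (Fin b) ℤ)
    (M : Matrix (Fin n) (Fin n) ℤ) : Prop :=
  ∃ (xA yA : Fin a → Fin n) (xB yB : Fin b → Fin n) (r c : Fin n),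
    StrictMono xA ∧ StrictMono yA ∧ StrictMono xB ∧ StrictMono yB ∧
    (∀ i j, xA i < xB j) ∧ (∀ i, xA i < r) ∧ (∀ i, xB i < r) ∧ r ≤ c ∧
    (∀ j, c < yB j) ∧ (∀ j, c < yA j) ∧ (∀ i j, yB i < yA j) ∧
    M r c = 1 ∧ (∀ i j, M (xA i) (yA j) = χ₁ i j) ∧ (∀ i j, M (xB i) (yB j) = χ i j)

lemma extract_qwit {χ : Matrix (Fin b) (Fin b) ℤ}
    (R C : Fin ((a+b) + (1 + (a+b))) → Fin n) (hR : StrictMono R) (hC : StrictMono C)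
    (hent : ∀ α β, M (R α) (C β) = doublePrimePat (antiBlock2 χ₁ χ) α β)
    (hle : R (TM a b) ≤ C (TM a b)) : QWit χ₁ χ M := by
  refine ⟨fun i => R (TA a b i), fun j => C (TAp a b j), fun i => R (TB a b i),
    fun j => C (TBp a b j), R (TM a b), C (TM a b),
    ?_, ?_, ?_, ?_, ?_, ?_, ?_, hle, ?_, ?_, ?_, ?_, ?_, ?_⟩
  · intro i j hij
    exact hR (by rw [Fin.lt_def, TA_val, TA_val]; exact hij)
  · intro i j hij
    exact hC (by rw [Fin.lt_def, TAp_val, TAp_val]; have := Fin.lt_def.mp hij; omega)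
  · intro i j hij
    exact hR (by rw [Fin.lt_def, TB_val, TB_val]; have := Fin.lt_def.mp hij; omega)
  · intro i j hij
    exact hC (by rw [Fin.lt_def, TBp_val, TBp_val]; have := Fin.lt_def.mp hij; omega)
  · intro i j
    exact hR (by rw [Fin.lt_def, TA_val, TB_val]; have := i.isLt; omega)
  · intro i
    exact hR (by rw [Fin.lt_def, TA_val, TM_val]; have := i.isLt; omega)
  · intro i
    exact hR (by rw [Fin.lt_def, TB_val, TM_val]; have := i.isLt; omega)
  · intro j
    exact hC (by rw [Fin.lt_def, TM_val, TBp_val]; omega)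
  · intro j
    exact hC (by rw [Fin.lt_def, TM_val, TAp_val]; omega)
  · intro i j
    exact hC (by rw [Fin.lt_def, TBp_val, TAp_val]; have := i.isLt; omega)
  · rw [hent, tau_MM]
  · intro i j
    rw [hent, tau_AAp]
  · intro i j
    rw [hent, tau_BBp]

lemma containsPattern_iff_qwit {χ : Matrix (Fin b) (Fin b) ℤ}
    (hM : IsSignedPermMatrix M) (hs : M.IsSymm)
    (h1 : IsSignedPermMatrix χ₁) (hχ : IsSignedPermMatrix χ) :
    ContainsPattern M (doublePrimePat (antiBlock2 χ₁ χ)) ↔ QWit χ₁ χ M := by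
  have hsymE : ∀ i j : Fin n, M j i = M i j := fun i j => by
    have := congrFun (congrFun hs i) j
    simpa using this
  constructor
  · rintro ⟨R, C, hR, hC, hent⟩
    rcases le_total (R (TM a b)) (C (TM a b)) with hle | hle
    · exact extract_qwit R C hR hC hent hle
    · refine extract_qwit C R hC hR (fun α β => ?_) hle
      rw [hsymE, hent]
      exact tau_symm χ₁ χ α β
  · rintro ⟨xA, yA, xB, yB, r, c, mxA, myA, mxB, myB, hxAxB, hxAr, hxBr, hrc,
      hcyB, hcyA, hyByA, hEC, hEA, hEB⟩
    have hxAc : ∀ i, xA i < c := fun i => lt_of_lt_of_le (hxAr i) hrc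
    have hxBc : ∀ i, xB i < c := fun i => lt_of_lt_of_le (hxBr i) hrc
    have hxAyB : ∀ i j, xA i < yB j := fun i j => lt_trans (hxAc i) (hcyB j)
    have hxAyA : ∀ i j, xA i < yA j := fun i j => lt_trans (hxAc i) (hcyA j)
    have hxByB : ∀ i j, xB i < yB j := fun i j => lt_trans (hxBc i) (hcyB j)
    have hxByA : ∀ i j, xB i < yA j := fun i j => lt_trans (hxBc i) (hcyA j)
    have hrow : ∀ (x y y' : Fin n), M x y ≠ 0 → y' ≠ y → M x y' = 0 := by
      intro x y y' hne hne'
      by_contra hcon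
      exact hne' ((hM.2.1 x).unique hcon hne)
    have hArow : ∀ (i : Fin a) (v : Fin n), (∀ t, v ≠ yA t) → M (xA i) v = 0 := by
      intro i v hv
      obtain ⟨j₀, hj₀, -⟩ := h1.2.1 i
      exact hrow _ (yA j₀) v (by rw [hEA]; exact hj₀) (hv j₀)
    have hBrow : ∀ (i : Fin b) (v : Fin n), (∀ t, v ≠ yB t) → M (xB i) v = 0 := by
      intro i v hv
      obtain ⟨j₀, hj₀, -⟩ := hχ.2.1 i
      exact hrow _ (yB j₀) v (by rw [hEB]; exact hj₀) (hv j₀)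
    have hMrow : ∀ v : Fin n, v ≠ c → M r v = 0 := by
      intro v hv
      exact hrow r c v (by rw [hEC]; exact one_ne_zero) hv
    have hBprow : ∀ (i : Fin b) (v : Fin n), (∀ t, v ≠ xB t) → M (yB i) v = 0 := by
      intro i v hv
      obtain ⟨t₀, ht₀, -⟩ := hχ.2.2 i
      refine hrow _ (xB t₀) v ?_ (hv t₀)
      rw [hsymE, hEB]
      exact ht₀
    have hAprow : ∀ (i : Fin a) (v : Fin n), (∀ t, v ≠ xA t) → M (yA i) v = 0 := by
      intro i v hv
      obtain ⟨t₀, ht₀, -⟩ := h1.2.2 i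
      refine hrow _ (xA t₀) v ?_ (hv t₀)
      rw [hsymE, hEA]
      exact ht₀
    set G : Fin n → Fin ((a+b) + (1 + (a+b))) → Fin n := fun mid α =>
      Sum.elim (fun t => Sum.elim xA xB (finSumFinEquiv.symm t))
        (Sum.elim (fun _ => mid)
          (fun t => Sum.elim yB yA ((eIn' a b).symm t)))
        ((eOut (a+b)).symm α) with hG
    have hGA : ∀ mid i, G mid (TA a b i) = xA i := by
      intro mid i; simp [hG, TA, eOut]
    have hGB : ∀ mid i, G mid (TB a b i) = xB i := by
      intro mid i; simp [hG, TB, eOut]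
    have hGM : ∀ mid, G mid (TM a b) = mid := by
      intro mid; simp [hG, TM, eOut]
    have hGBp : ∀ mid j, G mid (TBp a b j) = yB j := by
      intro mid j; simp [hG, TBp, eOut]
    have hGAp : ∀ mid j, G mid (TAp a b j) = yA j := by
      intro mid j; simp [hG, TAp, eOut]
    have hmono : ∀ mid, (∀ i, xA i < mid) → (∀ i, xB i < mid) →
        (∀ j, mid < yB j) → (∀ j, mid < yA j) → StrictMono (G mid) := by
      intro mid m1 m2 m3 m4 α β hαβ
      rcases tau_cases α with ⟨i, rfl⟩ | ⟨i, rfl⟩ | rfl | ⟨i, rfl⟩ | ⟨i, rfl⟩ <;>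
        rcases tau_cases β with ⟨j, rfl⟩ | ⟨j, rfl⟩ | rfl | ⟨j, rfl⟩ | ⟨j, rfl⟩ <;>
        rw [Fin.lt_def] at hαβ <;>
        simp only [TA_val, TB_val, TM_val, TBp_val, TAp_val] at hαβ <;>
        simp only [hGA, hGB, hGM, hGBp, hGAp]
      · exact mxA (Fin.lt_def.mpr hαβ)
      · exact hxAxB i j
      · exact m1 i
      · exact hxAyB i j
      · exact hxAyA i j
      · exact absurd hαβ (by have := j.isLt; omega)
      · exact mxB (by rw [Fin.lt_def]; omega)
      · exact m2 i
      · exact hxByB i j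
      · exact hxByA i j
      · exact absurd hαβ (by have := j.isLt; omega)
      · exact absurd hαβ (by have := j.isLt; omega)
      · exact absurd hαβ (by omega)
      · exact m3 j
      · exact m4 j
      · exact absurd hαβ (by have := j.isLt; have := i.isLt; omega)
      · exact absurd hαβ (by have := j.isLt; have := i.isLt; omega)
      · exact absurd hαβ (by have := i.isLt; omega)
      · exact myB (by rw [Fin.lt_def]; omega)
      · exact hyByA i j
      · exact absurd hαβ (by have := j.isLt; have := i.isLt; omega)
      · exact absurd hαβ (by have := j.isLt; have := i.isLt; omega)
      · exact absurd hαβ (by have := i.isLt; omega)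
      · exact absurd hαβ (by have := j.isLt; have := i.isLt; omega)
      · exact myA (by rw [Fin.lt_def]; omega)
    refine ⟨G r, G c, hmono r hxAr hxBr
      (fun j => lt_of_le_of_lt hrc (hcyB j)) (fun j => lt_of_le_of_lt hrc (hcyA j)),
      hmono c hxAc hxBc hcyB hcyA, ?_⟩
    intro α β
    rcases tau_cases α with ⟨i, rfl⟩ | ⟨i, rfl⟩ | rfl | ⟨i, rfl⟩ | ⟨i, rfl⟩ <;>
      rcases tau_cases β with ⟨j, rfl⟩ | ⟨j, rfl⟩ | rfl | ⟨j, rfl⟩ | ⟨j, rfl⟩ <;>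
      simp only [hGA, hGB, hGM, hGBp, hGAp]
    · rw [tau_AA]
      exact hArow i _ (fun t => ne_of_lt (hxAyA j t))
    · rw [tau_AB]
      exact hArow i _ (fun t => ne_of_lt (hxByA j t))
    · rw [tau_AM]
      exact hArow i _ (fun t => ne_of_lt (hcyA t))
    · rw [tau_ABp]
      exact hArow i _ (fun t => ne_of_lt (hyByA j t))
    · rw [tau_AAp]
      exact hEA i j
    · rw [tau_BA]
      exact hBrow i _ (fun t => ne_of_lt (hxAyB j t))
    · rw [tau_BB]
      exact hBrow i _ (fun t => ne_of_lt (hxByB j t))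
    · rw [tau_BM]
      exact hBrow i _ (fun t => ne_of_lt (hcyB t))
    · rw [tau_BBp]
      exact hEB i j
    · rw [tau_BAp]
      exact hBrow i _ (fun t => ne_of_gt (hyByA t j))
    · rw [tau_MA]
      exact hMrow _ (ne_of_lt (hxAc j))
    · rw [tau_MB]
      exact hMrow _ (ne_of_lt (hxBc j))
    · rw [tau_MM]
      exact hEC
    · rw [tau_MBp]
      exact hMrow _ (ne_of_gt (hcyB j))
    · rw [tau_MAp]
      exact hMrow _ (ne_of_gt (hcyA j))
    · rw [tau_BpA]
      exact hBprow i _ (fun t => ne_of_lt (hxAxB j t))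
    · rw [tau_BpB, hsymE]
      exact hEB j i
    · rw [tau_BpM]
      exact hBprow i _ (fun t => ne_of_gt (hxBc t))
    · rw [tau_BpBp]
      exact hBprow i _ (fun t => ne_of_gt (hxByB t j))
    · rw [tau_BpAp]
      exact hBprow i _ (fun t => ne_of_gt (hxByA t j))
    · rw [tau_ApA, hsymE]
      exact hEA j i
    · rw [tau_ApB]
      exact hAprow i _ (fun t => ne_of_gt (hxAxB t j))
    · rw [tau_ApM]
      exact hAprow i _ (fun t => ne_of_gt (hxAc t))
    · rw [tau_ApBp]
      exact hAprow i _ (fun t => ne_of_gt (hxAyB t j))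
    · rw [tau_ApAp]
      exact hAprow i _ (fun t => ne_of_gt (hxAyA t j))

/-! ### The transfer lemma -/

lemma qwit_flip {χ : Matrix (Fin b) (Fin b) ℤ} (hs : M.IsSymm) (hq : QWit χ₁ χ M) :
    QWit χ₁ (-χ) (flipMat χ₁ M) := by
  have hsymE : ∀ i j : Fin n, M j i = M i j := fun i j => by
    have := congrFun (congrFun hs i) j
    simpa using this
  obtain ⟨xA, yA, xB, yB, r, c, mxA, myA, mxB, myB, hxAxB, hxAr, hxBr, hrc,
    hcyB, hcyA, hyByA, hEC, hEA, hEB⟩ := hq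
  -- Step 1: re-choose the center to be of minimal width
  have hex : ∃ w, ∃ r' c' : Fin n, r' ≤ c' ∧ M r' c' = 1 ∧ (∀ i, xA i < r') ∧
      (∀ i, xB i < r') ∧ (∀ j, c' < yB j) ∧ (∀ j, c' < yA j) ∧ ((c' : ℕ) - (r' : ℕ) = w) :=
    ⟨_, r, c, hrc, hEC, hxAr, hxBr, hcyB, hcyA, rfl⟩
  clear hEC
  obtain ⟨w, ⟨r, c, hrc, hEC, hxAr', hxBr, hcyB, hcyA', hw⟩, hminw⟩ := exists_minimal hex
  have hnpos : ¬ PosIn M r c := by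
    rintro ⟨p, q, g1, g2, g3, g4, hpq⟩
    have v1 := Fin.lt_def.mp g1
    have v2 := Fin.lt_def.mp g2
    have v3 := Fin.lt_def.mp g3
    have v4 := Fin.lt_def.mp g4
    rcases le_total p q with hpq' | hpq'
    · refine hminw ((q : ℕ) - (p : ℕ)) (by omega)
        ⟨p, q, hpq', hpq, fun i => lt_trans (hxAr' i) g1, fun i => lt_trans (hxBr i) g1,
         fun j => lt_trans g4 (hcyB j), fun j => lt_trans g4 (hcyA' j), rfl⟩
    · refine hminw ((p : ℕ) - (q : ℕ)) (by omega)
        ⟨q, p, hpq', by rw [hsymE]; exact hpq, fun i => lt_trans (hxAr' i) g3,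
         fun i => lt_trans (hxBr i) g3, fun j => lt_trans g2 (hcyB j),
         fun j => lt_trans g2 (hcyA' j), rfl⟩
  -- Step 2: re-choose the χ₁ part so that its entries are not flipped
  have hstep2 : ∃ xA' yA', StrictMono xA' ∧ StrictMono yA' ∧ (∀ i j, xA' i < xB j) ∧
      (∀ i, xA' i < r) ∧ (∀ j, c < yA' j) ∧ (∀ i j, yB i < yA' j) ∧
      (∀ i j, M (xA' i) (yA' j) = χ₁ i j) ∧
      (∀ i j, χ₁ i j ≠ 0 → ¬ FlipCond χ₁ M (xA' i) (yA' j)) := by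
    rcases Nat.eq_zero_or_pos a with ha | ha
    · subst ha
      refine ⟨fun t => t.elim0, fun t => t.elim0, ?_, ?_, ?_, ?_, ?_, ?_, ?_, ?_⟩
      · intro s t h
        exact s.elim0
      · intro s t h
        exact s.elim0
      · intro i
        exact i.elim0
      · intro i
        exact i.elim0
      · intro j
        exact j.elim0
      · intro i j
        exact j.elim0
      · intro i
        exact i.elim0
      · intro i
        exact i.elim0
    · obtain ⟨m, rfl⟩ : ∃ m, a = m + 1 := ⟨a - 1, by omega⟩
      have hex2 : ∃ w, ∃ xA' yA' : Fin (m+1) → Fin n, StrictMono xA' ∧ StrictMono yA' ∧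
          (∀ i j, xA' i < xB j) ∧ (∀ i, xA' i < r) ∧ (∀ j, c < yA' j) ∧
          (∀ i j, yB i < yA' j) ∧ (∀ i j, M (xA' i) (yA' j) = χ₁ i j) ∧
          ((xA' (Fin.last m) : ℕ) = w) :=
        ⟨_, xA, yA, mxA, myA, hxAxB, hxAr', hcyA', hyByA, hEA, rfl⟩
      obtain ⟨w2, ⟨xA', yA', mxA', myA', hxAxB', hxAr'', hcyA'', hyByA', hEA', hw2⟩, hminw2⟩ :=
        exists_minimal hex2
      refine ⟨xA', yA', mxA', myA', hxAxB', hxAr'', hcyA'', hyByA', hEA', ?_⟩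
      intro i j hij
      rintro ⟨-, -, hspan⟩
      have hxy : xA' i < yA' j :=
        lt_trans (lt_of_lt_of_le (hxAr'' i) hrc) (hcyA'' j)
      rw [min_eq_left (le_of_lt hxy), max_eq_right (le_of_lt hxy)] at hspan
      obtain ⟨x', y', mx', my', hx'lt, hy'gt, hent'⟩ := hspan
      have hlast : x' (Fin.last m) < xA' (Fin.last m) :=
        lt_of_lt_of_le (hx'lt _) (mxA'.monotone (Fin.le_last i))
      refine hminw2 ((x' (Fin.last m) : ℕ)) (by rw [← hw2]; exact Fin.lt_def.mp hlast)
        ⟨x', y', mx', my', fun s t => lt_trans (hx'lt s) (hxAxB' i t),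
         fun s => lt_trans (hx'lt s) (hxAr'' i),
         fun t => lt_trans (hcyA'' j) (hy'gt t),
         fun s t => lt_trans (hyByA' s j) (hy'gt t), hent', rfl⟩
  obtain ⟨xA2, yA2, mxA2, myA2, hxAxB2, hxAr2, hcyA2, hyByA2, hEA2, hnc2⟩ := hstep2
  refine ⟨xA2, yA2, xB, yB, r, c, mxA2, myA2, mxB, myB, hxAxB2, hxAr2, hxBr, hrc,
    hcyB, hcyA2, hyByA2, ?_, ?_, ?_⟩
  · have hnflip : ¬ FlipCond χ₁ M r c := by
      rintro ⟨hne, hpos, -⟩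
      rw [min_eq_left hrc, max_eq_right hrc] at hpos
      exact hnpos hpos
    rw [flipMat_apply, if_neg hnflip]
    exact hEC
  · intro i j
    by_cases hz : χ₁ i j = 0
    · rw [hz, flipMat_eq_zero_iff, hEA2]
      exact hz
    · rw [flipMat_apply, if_neg (hnc2 i j hz)]
      exact hEA2 i j
  · intro i j
    have hlt : xB i < yB j := lt_trans (lt_of_lt_of_le (hxBr i) hrc) (hcyB j)
    by_cases hz : χ i j = 0
    · rw [Matrix.neg_apply, hz, neg_zero, flipMat_eq_zero_iff, hEB]
      exact hz
    · have hcond : FlipCond χ₁ M (xB i) (yB j) := by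
        refine ⟨ne_of_lt hlt, ?_, ?_⟩
        · rw [min_eq_left (le_of_lt hlt), max_eq_right (le_of_lt hlt)]
          exact ⟨r, c, hxBr i, lt_of_le_of_lt hrc (hcyB j),
            lt_of_lt_of_le (hxBr i) hrc, hcyB j, hEC⟩
        · rw [min_eq_left (le_of_lt hlt), max_eq_right (le_of_lt hlt)]
          exact ⟨xA2, yA2, mxA2, myA2, fun t => hxAxB2 t i, fun t => hyByA2 j t, hEA2⟩
      rw [flipMat_apply, if_pos hcond, hEB, Matrix.neg_apply]


lemma neg_spm {χ : Matrix (Fin b) (Fin b) ℤ} (h : IsSignedPermMatrix χ) :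
    IsSignedPermMatrix (-χ) := by
  obtain ⟨he, hr, hc⟩ := h
  refine ⟨fun i j => ?_, fun i => ?_, fun j => ?_⟩
  · rcases he i j with h | h | h <;> simp [Matrix.neg_apply, h]
  · exact (existsUnique_congr fun j => by simp [Matrix.neg_apply]).mpr (hr i)
  · exact (existsUnique_congr fun i => by simp [Matrix.neg_apply]).mpr (hc j)

lemma ncard_eq_of_invol {α : Type*} (f : α → α) (A B : Set α)
    (hAB : ∀ x ∈ A, f x ∈ B) (hBA : ∀ x ∈ B, f x ∈ A) (hf : ∀ x, f (f x) = x) :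
    A.ncard = B.ncard := by
  have himg : f '' A = B := by
    apply Set.Subset.antisymm
    · rintro _ ⟨M, hMA, rfl⟩
      exact hAB M hMA
    · intro M hMB
      exact ⟨f M, hBA M hMB, hf M⟩
  have hinj : Set.InjOn f A := by
    intro x _ y _ hxy
    have h2 : f (f x) = f (f y) := by rw [hxy]
    rwa [hf, hf] at h2
  rw [← himg, Set.ncard_image_of_injOn hinj]

end Stmt14Aux

/-- [[0,0,0,0,χ₁],[0,0,0,χ₂,0],[0,0,1,0,0],[0,χ₂ᵗ,0,0,0],[χ₁ᵗ,0,0,0,0]]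
and [[0,0,0,0,χ₁],[0,0,0,−χ₂,0],[0,0,1,0,0],[0,−χ₂ᵗ,0,0,0],[χ₁ᵗ,0,0,0,0]] are
I-Wilf equivalent. -/
theorem stmt14 {a b : ℕ} (χ₁ : Matrix (Fin a) (Fin a) ℤ) (χ₂ : Matrix (Fin b) (Fin b) ℤ)
    (h1 : IsSignedPermMatrix χ₁) (h2 : IsSignedPermMatrix χ₂) :
    ∀ n : ℕ, 1 ≤ n →
      SIAvoidCount n (doublePrimePat (antiBlock2 χ₁ χ₂)) =
      SIAvoidCount n (doublePrimePat (antiBlock2 χ₁ (-χ₂))) := by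
  intro n _
  have h2' : IsSignedPermMatrix (-χ₂) := Stmt14Aux.neg_spm h2
  unfold SIAvoidCount
  refine Stmt14Aux.ncard_eq_of_invol (Stmt14Aux.flipMat χ₁) _ _ ?_ ?_
    (fun M => Stmt14Aux.flipMat_flipMat)
  · rintro M ⟨hM, hs, hnc⟩
    refine ⟨Stmt14Aux.flipMat_spm hM, Stmt14Aux.flipMat_isSymm hs, ?_⟩
    intro hcon
    apply hnc
    have hq := (Stmt14Aux.containsPattern_iff_qwit (Stmt14Aux.flipMat_spm hM)
      (Stmt14Aux.flipMat_isSymm hs) h1 h2').mp hcon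
    have hq2 := Stmt14Aux.qwit_flip (Stmt14Aux.flipMat_isSymm hs) hq
    rw [Stmt14Aux.flipMat_flipMat, neg_neg] at hq2
    exact (Stmt14Aux.containsPattern_iff_qwit hM hs h1 h2).mpr hq2
  · rintro M ⟨hM, hs, hnc⟩
    refine ⟨Stmt14Aux.flipMat_spm hM, Stmt14Aux.flipMat_isSymm hs, ?_⟩
    intro hcon
    apply hnc
    have hq := (Stmt14Aux.containsPattern_iff_qwit (Stmt14Aux.flipMat_spm hM)
      (Stmt14Aux.flipMat_isSymm hs) h1 h2).mp hcon
    have hq2 := Stmt14Aux.qwit_flip (Stmt14Aux.flipMat_isSymm hs) hq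
    rw [Stmt14Aux.flipMat_flipMat] at hq2
    exact (Stmt14Aux.containsPattern_iff_qwit hM hs h1 h2').mpr hq2
end

section
/- Let σ be a signed permutation matrix of size k and let π ∈ SI_n be a signed involution. Then π contains the pattern σ' = [[0,σ],[σᵗ,0]] if and only if the filling π⁺ (the entries of π strictly above the main diagonal, viewed as a filling of the staircase NE-shape of cells (i,j) with 1 ≤ i < j ≤ n) contains σ. Consequently, π avoids σ' if and only if π⁺ avoids σ. -/
open Matrix

section Aux

variable {k n : ℕ}

lemma primePat_ll (σ : Matrix (Fin k) (Fin k) ℤ) (a b : Fin k) :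
    primePat σ (Fin.castAdd k a) (Fin.castAdd k b) = 0 := by
  unfold primePat
  rw [Matrix.reindex_apply, ← finSumFinEquiv_apply_left a, ← finSumFinEquiv_apply_left b,
    Matrix.submatrix_apply, Equiv.symm_apply_apply, Equiv.symm_apply_apply]
  rfl

lemma primePat_lr (σ : Matrix (Fin k) (Fin k) ℤ) (a b : Fin k) :
    primePat σ (Fin.castAdd k a) (Fin.natAdd k b) = σ a b := by
  unfold primePat
  rw [Matrix.reindex_apply, ← finSumFinEquiv_apply_left a, ← finSumFinEquiv_apply_right b,
    Matrix.submatrix_apply, Equiv.symm_apply_apply, Equiv.symm_apply_apply]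
  rfl

lemma primePat_rl (σ : Matrix (Fin k) (Fin k) ℤ) (a b : Fin k) :
    primePat σ (Fin.natAdd k a) (Fin.castAdd k b) = σ b a := by
  unfold primePat
  rw [Matrix.reindex_apply, ← finSumFinEquiv_apply_right a, ← finSumFinEquiv_apply_left b,
    Matrix.submatrix_apply, Equiv.symm_apply_apply, Equiv.symm_apply_apply]
  rfl

lemma primePat_rr (σ : Matrix (Fin k) (Fin k) ℤ) (a b : Fin k) :
    primePat σ (Fin.natAdd k a) (Fin.natAdd k b) = 0 := by
  unfold primePat
  rw [Matrix.reindex_apply, ← finSumFinEquiv_apply_right a, ← finSumFinEquiv_apply_right b,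
    Matrix.submatrix_apply, Equiv.symm_apply_apply, Equiv.symm_apply_apply]
  rfl

/-- Combine two maps into one on `Fin (k+k)`. -/
def combineMap (r c : Fin k → Fin n) : Fin (k + k) → Fin n :=
  fun i => Fin.addCases (motive := fun _ => Fin n) r c i

lemma combineMap_left (r c : Fin k → Fin n) (a : Fin k) :
    combineMap r c (Fin.castAdd k a) = r a :=
  Fin.addCases_left a

lemma combineMap_right (r c : Fin k → Fin n) (a : Fin k) :
    combineMap r c (Fin.natAdd k a) = c a :=
  Fin.addCases_right a

lemma combineMap_strictMono {r c : Fin k → Fin n} (hr : StrictMono r) (hc : StrictMono c)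
    (hlt : ∀ a b, r a < c b) : StrictMono (combineMap r c) := by
  intro i j hij
  induction i using Fin.addCases with
  | left a =>
    induction j using Fin.addCases with
    | left b =>
      rw [combineMap_left, combineMap_left]
      refine hr ?_
      simp only [Fin.lt_def, Fin.coe_castAdd] at hij ⊢
      exact hij
    | right b =>
      rw [combineMap_left, combineMap_right]
      exact hlt a b
  | right a =>
    induction j using Fin.addCases with
    | left b =>
      exfalso
      simp only [Fin.lt_def, Fin.coe_natAdd, Fin.coe_castAdd] at hij
      omega
    | right b =>
      rw [combineMap_right, combineMap_right]
      refine hc ?_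
      simp only [Fin.lt_def, Fin.coe_natAdd] at hij ⊢
      omega

end Aux

/-- a signed involution π contains σ' = [[0,σ],[σᵗ,0]] if and only if
the strictly-above-diagonal part π⁺ of π (a filling of the staircase NE-shape of
cells (i,j) with i < j) contains σ; consequently π avoids σ' iff π⁺ avoids σ. -/
theorem stmt16 {k n : ℕ} (σ : Matrix (Fin k) (Fin k) ℤ) (hσ : IsSignedPermMatrix σ)
    (M : Matrix (Fin n) (Fin n) ℤ) (hM : IsSignedPermMatrix M) (hsym : M.IsSymm) :
    ContainsPattern M (primePat σ) ↔
      ∃ r c : Fin k → Fin n, StrictMono r ∧ StrictMono c ∧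
        (∀ a b, r a < c b) ∧ (∀ a b, M (r a) (c b) = σ a b) := by
  constructor
  · rintro ⟨R, C, hR, hC, hval⟩
    by_cases hA : ∀ a b : Fin k, R (Fin.castAdd k a) < C (Fin.natAdd k b)
    · refine ⟨fun a => R (Fin.castAdd k a), fun b => C (Fin.natAdd k b),
        fun a b hab => hR (by simp only [Fin.lt_def, Fin.coe_castAdd]; exact hab),
        fun a b hab => hC (by simp only [Fin.lt_def, Fin.coe_natAdd]; exact Nat.add_lt_add_left hab k),
        hA, fun a b => by rw [hval, primePat_lr]⟩
    · push_neg at hA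
      obtain ⟨a0, b0, hab0⟩ := hA
      have key : ∀ a b : Fin k, C (Fin.castAdd k a) < R (Fin.natAdd k b) := by
        intro a b
        calc C (Fin.castAdd k a) < C (Fin.natAdd k b0) :=
              hC (by simp only [Fin.lt_def, Fin.coe_castAdd, Fin.coe_natAdd]; omega)
          _ ≤ R (Fin.castAdd k a0) := hab0
          _ < R (Fin.natAdd k b) :=
              hR (by simp only [Fin.lt_def, Fin.coe_castAdd, Fin.coe_natAdd]; omega)
      refine ⟨fun a => C (Fin.castAdd k a), fun b => R (Fin.natAdd k b),
        fun a b hab => hC (by simp only [Fin.lt_def, Fin.coe_castAdd]; exact hab),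
        fun a b hab => hR (by simp only [Fin.lt_def, Fin.coe_natAdd]; exact Nat.add_lt_add_left hab k),
        key, fun a b => ?_⟩
      have := hsym.apply (C (Fin.castAdd k a)) (R (Fin.natAdd k b))
      rw [← this, hval, primePat_rl]
  · rintro ⟨r, c, hr, hc, hlt, hval⟩
    refine ⟨combineMap r c, combineMap r c, combineMap_strictMono hr hc hlt,
      combineMap_strictMono hr hc hlt, fun a b => ?_⟩
    induction a using Fin.addCases with
    | left a =>
      induction b using Fin.addCases with
      | left b =>
        rw [combineMap_left, combineMap_left, primePat_ll]
        obtain ⟨j0, hj0, _⟩ := hσ.2.1 a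
        obtain ⟨j1, _, huniq⟩ := hM.2.1 (r a)
        by_contra h
        have h1 : r b = j1 := huniq _ h
        have h2 : c j0 = j1 := huniq _ (show M (r a) (c j0) ≠ 0 by rw [hval]; exact hj0)
        exact absurd (h1 ▸ h2 ▸ hlt b j0) (lt_irrefl _)
      | right b =>
        rw [combineMap_left, combineMap_right, primePat_lr]
        exact hval a b
    | right a =>
      induction b using Fin.addCases with
      | left b =>
        rw [combineMap_right, combineMap_left, primePat_rl]
        rw [← hsym.apply (c a) (r b)]
        exact hval b a
      | right b =>
        rw [combineMap_right, combineMap_right, primePat_rr]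
        obtain ⟨i0, hi0, _⟩ := hσ.2.2 b
        obtain ⟨i1, _, huniq⟩ := hM.2.2 (c b)
        by_contra h
        have h1 : c a = i1 := huniq _ h
        have h2 : r i0 = i1 := huniq _ (show M (r i0) (c b) ≠ 0 by rw [hval]; exact hi0)
        exact absurd (h1 ▸ h2 ▸ hlt i0 a) (lt_irrefl _)
end

section
/- Let σ be a signed permutation matrix of size k and let π ∈ SI_n be a signed involution. Then π contains the pattern σ'' = [[0,0,σ],[0,1,0],[σᵗ,0,0]] if and only if the filling π₀⁺ (the entries of π on and above the main diagonal, viewed as a filling of the shape of cells (i,j) with 1 ≤ i ≤ j ≤ n) contains the (k+1)×(k+1) signed permutation matrix σ* = [[0,σ],[1,0]]. Consequently, π avoids σ'' if and only if π₀⁺ avoids σ*. -/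
open Matrix

/-- σ* = [[0,σ],[1,0]], a (k+1)×(k+1) signed permutation matrix. -/
def starPat {k : ℕ} (σ : Matrix (Fin k) (Fin k) ℤ) :
    Matrix (Fin (k + 1)) (Fin (k + 1)) ℤ :=
  antiBlock2 σ (1 : Matrix (Fin 1) (Fin 1) ℤ)

lemma fse_symm_lt {a b : ℕ} (x : Fin (a+b)) (h : (x:ℕ) < a) :
    finSumFinEquiv.symm x = Sum.inl ⟨x, h⟩ := by
  rw [Equiv.symm_apply_eq, finSumFinEquiv_apply_left]
  exact Fin.ext rfl

lemma fse_symm_ge {a b : ℕ} (x : Fin (a+b)) (h : a ≤ (x:ℕ)) :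
    finSumFinEquiv.symm x = Sum.inr ⟨(x:ℕ) - a, by omega⟩ := by
  rw [Equiv.symm_apply_eq, finSumFinEquiv_apply_right]
  exact Fin.ext (by simp [Fin.natAdd]; omega)

lemma starPat_apply {k : ℕ} (σ : Matrix (Fin k) (Fin k) ℤ) (a b : Fin (k+1)) :
    starPat σ a b =
      if ha : (a:ℕ) < k then
        (if hb : (b:ℕ) = 0 then 0 else σ ⟨a, ha⟩ ⟨(b:ℕ)-1, by omega⟩)
      else (if (b:ℕ) = 0 then 1 else 0) := by
  rw [starPat, antiBlock2, Matrix.reindex_apply, Matrix.submatrix_apply]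
  rw [Equiv.symm_trans_apply]
  have hb' : (finCongr (Nat.add_comm 1 k)).symm b = (⟨(b:ℕ), by omega⟩ : Fin (1+k)) := rfl
  rw [hb']
  by_cases ha : (a:ℕ) < k <;> by_cases hb : (b:ℕ) = 0
  · rw [fse_symm_lt a ha,
      fse_symm_lt (⟨(b:ℕ), by omega⟩ : Fin (1+k)) (show (b:ℕ) < 1 by omega)]
    simp [ha, hb]
  · rw [fse_symm_lt a ha,
      fse_symm_ge (⟨(b:ℕ), by omega⟩ : Fin (1+k)) (show 1 ≤ (b:ℕ) by omega)]
    simp [ha, hb]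
  · rw [fse_symm_ge a (by omega),
      fse_symm_lt (⟨(b:ℕ), by omega⟩ : Fin (1+k)) (show (b:ℕ) < 1 by omega)]
    have h0 : ∀ w : Fin 1, w = 0 := fun w => Fin.ext (by omega)
    simp [ha, hb, Matrix.one_apply, h0]
  · rw [fse_symm_ge a (by omega),
      fse_symm_ge (⟨(b:ℕ), by omega⟩ : Fin (1+k)) (show 1 ≤ (b:ℕ) by omega)]
    simp [ha, hb]

lemma dpp_apply {k : ℕ} (σ : Matrix (Fin k) (Fin k) ℤ) (x y : Fin (k+(1+k))) :
    doublePrimePat σ x y =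
      if hx : (x:ℕ) < k then
        (if hy : (y:ℕ) < k then 0
         else if (y:ℕ) = k then 0
         else σ ⟨x, hx⟩ ⟨(y:ℕ) - (k+1), by omega⟩)
      else if hx' : (x:ℕ) = k then (if (y:ℕ) = k then 1 else 0)
      else (if hy : (y:ℕ) < k then σ ⟨y, hy⟩ ⟨(x:ℕ) - (k+1), by omega⟩
            else 0) := by
  rw [doublePrimePat, Matrix.reindex_apply, Matrix.submatrix_apply]
  rw [Equiv.symm_trans_apply, Equiv.symm_trans_apply]
  have key : ∀ z : Fin (k+(1+k)),
      (Equiv.sumCongr (Equiv.refl (Fin k)) finSumFinEquiv).symm (finSumFinEquiv.symm z) =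
      if hz : (z:ℕ) < k then Sum.inl ⟨z, hz⟩
      else if hz' : (z:ℕ) = k then Sum.inr (Sum.inl 0)
      else Sum.inr (Sum.inr ⟨(z:ℕ) - (k+1), by omega⟩) := by
    intro z
    by_cases hz : (z:ℕ) < k
    · rw [fse_symm_lt z hz]; simp [hz]
    · by_cases hz' : (z:ℕ) = k
      · rw [fse_symm_ge z (by omega), dif_neg hz, dif_pos hz']
        have h2 : finSumFinEquiv.symm (⟨(z:ℕ)-k, by omega⟩ : Fin (1+k)) = Sum.inl 0 := by
          rw [fse_symm_lt _ (show (z:ℕ)-k < 1 by omega)]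
          exact congrArg Sum.inl (Fin.ext (show (z:ℕ)-k = 0 by omega))
        simp [h2]
      · rw [fse_symm_ge z (by omega), dif_neg hz, dif_neg hz']
        have h2 : finSumFinEquiv.symm (⟨(z:ℕ)-k, by omega⟩ : Fin (1+k)) =
            Sum.inr ⟨(z:ℕ)-(k+1), by omega⟩ := by
          rw [fse_symm_ge _ (show 1 ≤ (z:ℕ)-k by omega)]
          exact congrArg Sum.inr (Fin.ext (show (z:ℕ)-k-1 = (z:ℕ)-(k+1) by omega))
        simp [h2]
  rw [key x, key y]
  split_ifs <;> first | omega | rfl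

lemma mat_congr {k : ℕ} (σ : Matrix (Fin k) (Fin k) ℤ) {i j i' j' : Fin k}
    (hi : (i:ℕ) = (i':ℕ)) (hj : (j:ℕ) = (j':ℕ)) : σ i j = σ i' j' := by
  rw [Fin.ext hi, Fin.ext hj]

/-- a signed involution π contains σ'' = [[0,0,σ],[0,1,0],[σᵗ,0,0]]
if and only if the weakly-above-diagonal part π₀⁺ of π (a filling of the shape of
cells (i,j) with i ≤ j) contains σ* = [[0,σ],[1,0]]; consequently π avoids σ'' iff
π₀⁺ avoids σ*. -/
theorem stmt17 {k n : ℕ} (σ : Matrix (Fin k) (Fin k) ℤ) (hσ : IsSignedPermMatrix σ)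
    (M : Matrix (Fin n) (Fin n) ℤ) (hM : IsSignedPermMatrix M) (hsym : M.IsSymm) :
    ContainsPattern M (doublePrimePat σ) ↔
      ∃ r c : Fin (k + 1) → Fin n, StrictMono r ∧ StrictMono c ∧
        (∀ a b, r a ≤ c b) ∧ (∀ a b, M (r a) (c b) = starPat σ a b) := by
  constructor
  · rintro ⟨r', c', hr', hc', hent⟩
    by_cases hcase : r' ⟨k, by omega⟩ ≤ c' ⟨k, by omega⟩
    · refine ⟨fun a => r' ⟨(a:ℕ), by omega⟩, fun b => c' ⟨k + (b:ℕ), by omega⟩,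
        ?_, ?_, ?_, ?_⟩
      · intro a a' h
        exact hr' (Fin.mk_lt_mk.2 (Fin.lt_def.1 h))
      · intro a a' h
        exact hc' (Fin.mk_lt_mk.2 (by have := Fin.lt_def.1 h; omega))
      · intro a b
        dsimp only
        calc r' ⟨(a:ℕ), by omega⟩ ≤ r' ⟨k, by omega⟩ :=
              hr'.monotone (Fin.mk_le_mk.2 (by omega))
          _ ≤ c' ⟨k, by omega⟩ := hcase
          _ ≤ c' ⟨k + (b:ℕ), by omega⟩ := hc'.monotone (Fin.mk_le_mk.2 (by omega))
      · intro a b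
        dsimp only
        have h := hent ⟨(a:ℕ), by omega⟩ ⟨k + (b:ℕ), by omega⟩
        rw [dpp_apply] at h
        rw [starPat_apply]
        simp only [Fin.val_mk] at h ⊢
        split_ifs at h ⊢ <;>
          first
            | omega
            | exact h
            | exact h.trans (mat_congr σ rfl (by simp only [Fin.val_mk]; omega))
    · refine ⟨fun a => c' ⟨(a:ℕ), by omega⟩, fun b => r' ⟨k + (b:ℕ), by omega⟩,
        ?_, ?_, ?_, ?_⟩
      · intro a a' h
        exact hc' (Fin.mk_lt_mk.2 (Fin.lt_def.1 h))
      · intro a a' h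
        exact hr' (Fin.mk_lt_mk.2 (by have := Fin.lt_def.1 h; omega))
      · intro a b
        dsimp only
        calc c' ⟨(a:ℕ), by omega⟩ ≤ c' ⟨k, by omega⟩ :=
              hc'.monotone (Fin.mk_le_mk.2 (by omega))
          _ ≤ r' ⟨k, by omega⟩ := le_of_lt (not_le.1 hcase)
          _ ≤ r' ⟨k + (b:ℕ), by omega⟩ := hr'.monotone (Fin.mk_le_mk.2 (by omega))
      · intro a b
        dsimp only
        have h := hent ⟨k + (b:ℕ), by omega⟩ ⟨(a:ℕ), by omega⟩
        rw [dpp_apply] at h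
        rw [hsym.apply, starPat_apply, h]
        simp only [Fin.val_mk]
        split_ifs <;>
          first
            | omega
            | rfl
            | exact mat_congr σ rfl (by simp only [Fin.val_mk]; omega)
  · rintro ⟨r, c, hr, hc, hrc, hent⟩
    have rowzero : ∀ (i j j' : Fin n), M i j ≠ 0 → j' ≠ j → M i j' = 0 := by
      intro i j j' h hne
      by_contra h'
      exact hne ((hM.2.1 i).unique h' h)
    have colzero : ∀ (j i i' : Fin n), M i j ≠ 0 → i' ≠ i → M i' j = 0 := by
      intro j i i' h hne
      by_contra h'
      exact hne ((hM.2.2 j).unique h' h)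
    have E1 : ∀ (i j : ℕ) (hi : i < k) (hj : j < k),
        M (r ⟨i, by omega⟩) (c ⟨j+1, by omega⟩) = σ ⟨i, hi⟩ ⟨j, hj⟩ := by
      intro i j hi hj
      rw [hent, starPat_apply]
      simp only [Fin.val_mk]
      rw [dif_pos hi, dif_neg (by omega)]
      exact mat_congr σ rfl (show j+1-1 = j by omega)
    have E2 : M (r ⟨k, by omega⟩) (c ⟨0, by omega⟩) = 1 := by
      rw [hent, starPat_apply]
      simp
    have E3 : ∀ (i : ℕ) (hi : i < k), M (r ⟨i, by omega⟩) (c ⟨0, by omega⟩) = 0 := by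
      intro i hi
      rw [hent, starPat_apply]
      simp [hi]
    have E4 : ∀ (j : ℕ) (hj : j < k), M (r ⟨k, by omega⟩) (c ⟨j+1, by omega⟩) = 0 := by
      intro j hj
      rw [hent, starPat_apply]
      simp
    refine ⟨fun x => if h : (x:ℕ) ≤ k then r ⟨(x:ℕ), by omega⟩ else c ⟨(x:ℕ)-k, by omega⟩,
            fun y => if h : (y:ℕ) < k then r ⟨(y:ℕ), by omega⟩ else c ⟨(y:ℕ)-k, by omega⟩,
            ?_, ?_, ?_⟩
    · intro x x' h
      have hv := Fin.lt_def.1 h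
      dsimp only
      split_ifs with h1 h2
      · exact hr (Fin.mk_lt_mk.2 hv)
      · exact lt_of_le_of_lt (hrc ⟨(x:ℕ), by omega⟩ ⟨0, by omega⟩)
          (hc (Fin.mk_lt_mk.2 (by omega)))
      · omega
      · exact hc (Fin.mk_lt_mk.2 (by omega))
    · intro y y' h
      have hv := Fin.lt_def.1 h
      dsimp only
      split_ifs with h1 h2
      · exact hr (Fin.mk_lt_mk.2 hv)
      · exact lt_of_lt_of_le (hr (Fin.mk_lt_mk.2 (show (y:ℕ) < k by omega)))
          (hrc ⟨k, by omega⟩ ⟨(y':ℕ)-k, by omega⟩)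
      · omega
      · exact hc (Fin.mk_lt_mk.2 (by omega))
    · intro x y
      rw [dpp_apply]
      dsimp only
      split_ifs with h1 h2 h3 h4 h5 h6 h7 h8 h9 h10 h11 h12 <;> try omega
      · obtain ⟨⟨j, hjk⟩, hj⟩ := (hσ.2.1 ⟨(x:ℕ), h3⟩).exists
        refine rowzero _ (c ⟨j+1, by omega⟩) _ ?_ ?_
        · rw [E1 (x:ℕ) j h3 hjk]; exact hj
        · exact ne_of_lt (lt_of_le_of_lt (hrc ⟨(y:ℕ), by omega⟩ ⟨0, by omega⟩)
            (hc (Fin.mk_lt_mk.2 (by omega))))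
      · simp only [h4]
        refine rowzero _ (c ⟨0, by omega⟩) _ ?_ ?_
        · rw [E2]; exact one_ne_zero
        · exact ne_of_lt (lt_of_lt_of_le
            (hr (Fin.mk_lt_mk.2 (show (y:ℕ) < k by omega)))
            (hrc ⟨k, by omega⟩ ⟨0, by omega⟩))
      · simp only [show (y:ℕ)-k = 0 by omega]
        exact E3 (x:ℕ) h6
      · simp only [show (y:ℕ)-k = (y:ℕ)-(k+1)+1 by omega]
        exact E1 (x:ℕ) ((y:ℕ)-(k+1)) h6 (by omega)
      · simp only [h8, show (y:ℕ)-k = 0 by omega]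
        exact E2
      · simp only [h8, show (y:ℕ)-k = (y:ℕ)-(k+1)+1 by omega]
        exact E4 ((y:ℕ)-(k+1)) (by omega)
      · rw [hsym.apply]
        simp only [show (x:ℕ)-k = (x:ℕ)-(k+1)+1 by omega]
        exact E1 (y:ℕ) ((x:ℕ)-(k+1)) h10 (by omega)
      · by_cases hy9 : (y:ℕ) = k
        · simp only [show (y:ℕ)-k = 0 by omega]
          refine colzero _ (r ⟨k, by omega⟩) _ ?_ ?_
          · rw [E2]; exact one_ne_zero
          · exact ne_of_gt (lt_of_le_of_lt (hrc ⟨k, by omega⟩ ⟨0, by omega⟩)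
              (hc (Fin.mk_lt_mk.2 (by omega))))
        · obtain ⟨⟨i0, hi0⟩, hnz⟩ := (hσ.2.2 ⟨(y:ℕ)-(k+1), by omega⟩).exists
          simp only [show (y:ℕ)-k = (y:ℕ)-(k+1)+1 by omega]
          refine colzero _ (r ⟨i0, by omega⟩) _ ?_ ?_
          · rw [E1 i0 ((y:ℕ)-(k+1)) hi0 (by omega)]
            exact hnz
          · exact ne_of_gt (lt_of_le_of_lt (hrc ⟨i0, by omega⟩ ⟨0, by omega⟩)
              (hc (Fin.mk_lt_mk.2 (by omega))))
end
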